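/- arXiv:2406.18302 — 5 statements merged into one kernel-verified Lean document; each statement's English description precedes it below -/
import Mathlib

section
/- Let n be a positive integer and let π : ℂ^{n×n} → ℂ^n be the symmetrization map, π(M) = (σ_1(M), …, σ_n(M)). For every matrix B in the spectral unit ball Ω_n (i.e., every B ∈ ℂ^{n×n} with spectral radius r(B) < 1), the rank of the derivative π'(B) : ℂ^{n×n} → ℂ^n of π at B equals the degree of the minimal polynomial of B. -/
open Matrix Polynomial

attribute [local instance] Matrix.normedAddCommGroup Matrix.normedSpace

/-- `matSigma n j M` = σ_j(M), the coefficients defined by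
det(tI − M) = Σ_{j=0}^n (−1)^j σ_j(M) t^{n−j}, i.e. σ_j(M) = (−1)^j · coeff_{n−j}(charpoly M). -/
noncomputable def matSigma (n j : ℕ) (M : Matrix (Fin n) (Fin n) ℂ) : ℂ :=
  (-1 : ℂ) ^ j * (Matrix.charpoly M).coeff (n - j)

/-- The symmetrization map π : ℂ^{n×n} → ℂ^n, π(M) = (σ_1(M), …, σ_n(M)).
(The `j`-th component, `j : Fin n` zero-based, is σ_{j+1}(M).) -/
noncomputable def symmPi (n : ℕ) (M : Matrix (Fin n) (Fin n) ℂ) : Fin n → ℂ :=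
  fun j => matSigma n ((j : ℕ) + 1) M

section Aux
variable {n : ℕ}

-- Part 1: finrank of span of powers = natDegree minpoly
lemma part1 (n : ℕ) (hn : 0 < n) (B : Matrix (Fin n) (Fin n) ℂ) :
    Module.finrank ℂ (Submodule.span ℂ (Set.range fun k : Fin n => B ^ (k : ℕ)))
      = (minpoly ℂ B).natDegree := by
  haveI : Nonempty (Fin n) := ⟨⟨0, hn⟩⟩
  have hint : IsIntegral ℂ B := IsIntegral.of_finite ℂ B
  set d := (minpoly ℂ B).natDegree with hd
  have hdn : d ≤ n := by
    have h1 : minpoly ℂ B ∣ Matrix.charpoly B :=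
      minpoly.dvd ℂ B (Matrix.aeval_self_charpoly B)
    have h2 := Polynomial.natDegree_le_of_dvd h1 (Matrix.charpoly_monic B).ne_zero
    simpa [Matrix.charpoly_natDegree_eq_dim] using h2
  have hspan : Submodule.span ℂ (Set.range fun k : Fin n => B ^ (k : ℕ))
      = Submodule.span ℂ (Set.range fun k : Fin d => B ^ (k : ℕ)) := by
    apply le_antisymm
    · rw [Submodule.span_le]
      rintro _ ⟨k, rfl⟩
      exact hint.mem_span_pow ⟨X ^ (k : ℕ), by simp⟩
    · rw [Submodule.span_le]
      rintro _ ⟨k, rfl⟩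
      exact Submodule.subset_span ⟨⟨k, lt_of_lt_of_le k.2 hdn⟩, rfl⟩
  rw [hspan, finrank_span_eq_card (linearIndependent_pow B)]
  simp [hd]



/-- The trace pairing as a linear map into the dual. -/
noncomputable def trFL (n : ℕ) :
    Matrix (Fin n) (Fin n) ℂ →ₗ[ℂ] Module.Dual ℂ (Matrix (Fin n) (Fin n) ℂ) where
  toFun A := (Matrix.traceLinearMap (Fin n) ℂ ℂ).comp (LinearMap.mulLeft ℂ A)
  map_add' A B := by ext X; simp [Matrix.add_mul]
  map_smul' c A := by ext X; simp [Matrix.smul_mul]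

@[simp] lemma trFL_apply (A X : Matrix (Fin n) (Fin n) ℂ) :
    trFL n A X = Matrix.trace (A * X) := rfl

lemma trFL_injective : Function.Injective (trFL n) := by
  rw [← LinearMap.ker_eq_bot]
  rw [Submodule.eq_bot_iff]
  intro Z hZ
  ext i j
  have := congrArg (fun φ => φ (Matrix.single j i (1 : ℂ))) hZ
  simpa [Matrix.trace, Matrix.mul_apply, Matrix.single, Matrix.diag, ite_and,
    Finset.sum_ite_eq, Finset.sum_ite_eq', eq_comm] using this

lemma part2 (A : Fin n → Matrix (Fin n) (Fin n) ℂ) :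
    Module.finrank ℂ (LinearMap.range (LinearMap.pi fun j => trFL n (A j)))
      = Module.finrank ℂ (Submodule.span ℂ (Set.range A)) := by
  set Ψ : Matrix (Fin n) (Fin n) ℂ →ₗ[ℂ] (Fin n → ℂ) := LinearMap.pi fun j => trFL n (A j)
  have hdual : LinearMap.range Ψ.dualMap = Submodule.map (trFL n) (Submodule.span ℂ (Set.range A)) := by
    apply le_antisymm
    · rintro _ ⟨φ, rfl⟩
      have : Ψ.dualMap φ = trFL n (∑ j, φ (Pi.single j 1) • A j) := by
        ext X
        have hv : (fun j => Matrix.trace (A j * X)) = ∑ j, Matrix.trace (A j * X) • (Pi.single j (1:ℂ) : Fin n → ℂ) := by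
          funext k
          simp [Finset.sum_apply, Pi.single_apply, Finset.sum_ite_eq', smul_eq_mul]
        calc Ψ.dualMap φ X = φ (fun j => Matrix.trace (A j * X)) := rfl
          _ = ∑ j, Matrix.trace (A j * X) * φ (Pi.single j 1) := by
              rw [hv, map_sum]; simp [smul_eq_mul]
          _ = trFL n (∑ j, φ (Pi.single j 1) • A j) X := by
              simp [Finset.sum_mul, Matrix.smul_mul, mul_comm]
      rw [this]
      exact Submodule.mem_map_of_mem (Submodule.sum_mem _ fun j _ =>
        Submodule.smul_mem _ _ (Submodule.subset_span ⟨j, rfl⟩))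
    · rw [Submodule.map_span, Submodule.span_le]
      rintro _ ⟨_, ⟨j, rfl⟩, rfl⟩
      exact ⟨LinearMap.proj j, rfl⟩
  have h1 : Module.finrank ℂ (LinearMap.range Ψ.dualMap) = Module.finrank ℂ (LinearMap.range Ψ) :=
    LinearMap.finrank_range_dualMap_eq_finrank_range Ψ
  rw [← h1, hdual]
  exact (Submodule.equivMapOfInjective (trFL n) trFL_injective _).symm.finrank_eq



lemma eval_charpoly' (M : Matrix (Fin n) (Fin n) ℂ) (t : ℂ) :
    (Matrix.charpoly M).eval t = (t • (1 : Matrix (Fin n) (Fin n) ℂ) - M).det := by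
  rw [Matrix.charpoly, ← coe_evalRingHom, RingHom.map_det, RingHom.mapMatrix_apply]
  congr 1
  ext i j
  rcases eq_or_ne i j with rfl | hij
  · simp [charmatrix_apply_eq, Matrix.one_apply]
  · simp [charmatrix_apply_ne _ _ _ hij, Matrix.one_apply, hij]

/-- determinant as a continuous multilinear map in the rows -/
noncomputable def detCM (n : ℕ) : ContinuousMultilinearMap ℂ (fun _ : Fin n => (Fin n → ℂ)) ℂ where
  toMultilinearMap := (Matrix.detRowAlternating :
    (Fin n → ℂ) [⋀^Fin n]→ₗ[ℂ] ℂ).toMultilinearMap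
  cont := by
    show Continuous fun v : Fin n → Fin n → ℂ => Matrix.det (Matrix.of v)
    have h2 : (fun v : Fin n → Fin n → ℂ => Matrix.det (Matrix.of v))
        = fun v => ∑ σ : Equiv.Perm (Fin n), ((Equiv.Perm.sign σ : ℤ) : ℂ) * ∏ i, v (σ i) i := by
      funext v; exact Matrix.det_apply' _
    rw [h2]
    refine continuous_finset_sum _ fun σ _ => Continuous.mul continuous_const ?_
    exact continuous_finset_prod _ fun i _ =>
      ((continuous_apply (i : Fin n)).comp (continuous_apply (σ i)))

lemma detCM_apply (v : Fin n → Fin n → ℂ) : detCM n v = Matrix.det (Matrix.of v) := rfl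

/-- the rows map as a linear map -/
noncomputable def rowsL (n : ℕ) : Matrix (Fin n) (Fin n) ℂ →ₗ[ℂ] (Fin n → (Fin n → ℂ)) where
  toFun M := fun i => M i
  map_add' _ _ := rfl
  map_smul' _ _ := rfl

lemma sum_det_updateRow (A X : Matrix (Fin n) (Fin n) ℂ) :
    ∑ i, (A.updateRow i (X i)).det = Matrix.trace (A.adjugate * X) := by
  have h1 : ∀ i, (A.updateRow i (X i)).det = ∑ k, X i k * A.adjugate k i := by
    intro i
    have h2 : X i = ∑ k, X i k • (Pi.single k 1 : Fin n → ℂ) := by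
      funext m; simp [Finset.sum_apply, Pi.single_apply, Finset.sum_ite_eq', smul_eq_mul]
    have h3 := congrArg (fun v => Aᵀ.cramer v i) h2
    simp only [map_sum, Finset.sum_apply, LinearMap.map_smul, Pi.smul_apply, smul_eq_mul] at h3
    rw [← Matrix.cramer_transpose_apply, h3]
    refine Finset.sum_congr rfl fun k _ => ?_
    rw [Matrix.cramer_transpose_apply, ← Matrix.adjugate_apply]
  simp only [h1, Matrix.trace, Matrix.diag, Matrix.mul_apply]
  rw [Finset.sum_comm]
  exact Finset.sum_congr rfl fun i _ => Finset.sum_congr rfl fun k _ => mul_comm _ _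

lemma hasFDerivAt_det_sub (A₀ B : Matrix (Fin n) (Fin n) ℂ) :
    HasFDerivAt (fun M : Matrix (Fin n) (Fin n) ℂ => (A₀ - M).det)
      (-(LinearMap.toContinuousLinearMap (trFL n ((A₀ - B).adjugate)))) B := by
  have hu : HasFDerivAt (fun M : Matrix (Fin n) (Fin n) ℂ => (rowsL n) (A₀ - M))
      (-(LinearMap.toContinuousLinearMap (rowsL n))) B := by
    have h := (LinearMap.toContinuousLinearMap (rowsL n)).hasFDerivAt (x := B)
    have heq : (fun M : Matrix (Fin n) (Fin n) ℂ => rowsL n (A₀ - M))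
        = fun M => rowsL n A₀ - rowsL n M := by
      funext M; rw [map_sub]
    rw [heq]
    exact h.const_sub (rowsL n A₀)
  have hd := (detCM n).hasFDerivAt (x := (rowsL n) (A₀ - B))
  have hcomp := hd.comp B hu
  have hfun : (⇑(detCM n)) ∘ (fun M : Matrix (Fin n) (Fin n) ℂ => rowsL n (A₀ - M))
      = fun M : Matrix (Fin n) (Fin n) ℂ => (A₀ - M).det := rfl
  rw [hfun] at hcomp
  refine hcomp.congr_fderiv (Eq.symm ?_)
  ext X
  change -Matrix.trace ((A₀ - B).adjugate * X) = (detCM n).linearDeriv ((rowsL n) (A₀ - B)) (-(rowsL n X))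
  simp only [ContinuousLinearMap.coe_comp', Function.comp_apply, ContinuousLinearMap.neg_apply,
    LinearMap.coe_toContinuousLinearMap', trFL_apply, Pi.neg_apply,
    ContinuousMultilinearMap.linearDeriv_apply]
  have hterm : ∀ i, (detCM n) (Function.update ((rowsL n) (A₀ - B)) i
      (-((rowsL n) X i)))
      = -((A₀ - B).updateRow i (X i)).det := by
    intro i
    have h1 : (detCM n) (Function.update ((rowsL n) (A₀ - B)) i (-((rowsL n) X i)))
        = ((A₀ - B).updateRow i (-(X i))).det := rfl
    rw [h1]
    have h2 : -(X i) = (-1 : ℂ) • (X i) := by funext j; simp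
    rw [h2, Matrix.det_updateRow_smul]
    simp
  rw [Finset.sum_congr rfl fun i _ => hterm i, Finset.sum_neg_distrib, ← sum_det_updateRow]



/-- `NB n B k` = ∑_{i < n-k} c_{k+1+i} B^i where c = coefficients of charpoly B. -/
noncomputable def NB (n : ℕ) (B : Matrix (Fin n) (Fin n) ℂ) (k : ℕ) :
    Matrix (Fin n) (Fin n) ℂ :=
  ∑ i ∈ Finset.range (n - k), (Matrix.charpoly B).coeff (k + 1 + i) • B ^ i

lemma NB_ge (B : Matrix (Fin n) (Fin n) ℂ) (hk : n ≤ k) : NB n B k = 0 := by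
  simp [NB, Nat.sub_eq_zero_of_le hk]

lemma NB_succ_rel (B : Matrix (Fin n) (Fin n) ℂ) {k : ℕ} (hk : k < n) :
    NB n B k = (Matrix.charpoly B).coeff (k + 1) • 1 + B * NB n B (k + 1) := by
  have h1 : n - k = (n - (k + 1)) + 1 := by omega
  rw [NB, h1, Finset.sum_range_succ']
  rw [NB, Finset.mul_sum]
  simp only [pow_zero, add_zero]
  rw [add_comm]
  congr 1
  refine Finset.sum_congr rfl fun i _ => ?_
  rw [mul_smul_comm, ← pow_succ']
  congr 2
  omega

lemma charpoly_natDeg (hn : 0 < n) (B : Matrix (Fin n) (Fin n) ℂ) :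
    (Matrix.charpoly B).natDegree = n := by
  simp [Matrix.charpoly_natDegree_eq_dim]

lemma B_mul_NB_zero (hn : 0 < n) (B : Matrix (Fin n) (Fin n) ℂ) :
    B * NB n B 0 = -((Matrix.charpoly B).coeff 0 • 1) := by
  have hCH : (aeval B) (Matrix.charpoly B) = 0 := Matrix.aeval_self_charpoly B
  rw [Polynomial.aeval_eq_sum_range, charpoly_natDeg hn, Finset.sum_range_succ'] at hCH
  simp only [pow_zero] at hCH
  have h2 : ∑ i ∈ Finset.range n, (Matrix.charpoly B).coeff (i + 1) • B ^ (i + 1)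
      = -((Matrix.charpoly B).coeff 0 • 1) := by
    rw [eq_neg_iff_add_eq_zero]; exact hCH
  rw [NB, Nat.sub_zero, Finset.mul_sum, ← h2]
  refine Finset.sum_congr rfl fun i _ => ?_
  rw [mul_smul_comm, ← pow_succ']
  congr 2
  omega

lemma key_mul (hn : 0 < n) (B : Matrix (Fin n) (Fin n) ℂ) (t : ℂ) :
    (t • (1 : Matrix (Fin n) (Fin n) ℂ) - B) * (∑ m ∈ Finset.range n, t ^ m • NB n B m)
      = ((Matrix.charpoly B).eval t) • (1 : Matrix (Fin n) (Fin n) ℂ) := by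
  set c := fun j => (Matrix.charpoly B).coeff j with hc
  set S := ∑ m ∈ Finset.range n, t ^ m • NB n B m with hS
  have hsub : (t • (1 : Matrix (Fin n) (Fin n) ℂ) - B) * S = t • S - B * S := by
    rw [Matrix.sub_mul, Matrix.smul_mul, Matrix.one_mul]
  have htS : t • S = ∑ m ∈ Finset.range n, t ^ (m + 1) • NB n B m := by
    rw [hS, Finset.smul_sum]
    refine Finset.sum_congr rfl fun m _ => ?_
    rw [smul_smul, ← pow_succ']
  have hshift : ∑ m ∈ Finset.range n, t ^ (m + 1) • NB n B (m + 1) = S - NB n B 0 := by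
    have h1 : ∑ m ∈ Finset.range (n + 1), t ^ m • NB n B m
        = (∑ m ∈ Finset.range n, t ^ (m + 1) • NB n B (m + 1)) + t ^ 0 • NB n B 0 :=
      Finset.sum_range_succ' _ n
    have h2 : ∑ m ∈ Finset.range (n + 1), t ^ m • NB n B m = S + t ^ n • NB n B n :=
      Finset.sum_range_succ _ n
    rw [NB_ge B le_rfl] at h2
    simp only [smul_zero, add_zero] at h2
    rw [h2] at h1
    simp only [pow_zero, one_smul] at h1
    rw [h1]; abel
  have hexp : t • S = (∑ m ∈ Finset.range n, c (m + 1) * t ^ (m + 1)) • (1 : Matrix (Fin n) (Fin n) ℂ)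
      + B * (S - NB n B 0) := by
    rw [htS]
    have : ∀ m ∈ Finset.range n, t ^ (m + 1) • NB n B m
        = (c (m + 1) * t ^ (m + 1)) • (1 : Matrix (Fin n) (Fin n) ℂ)
          + B * (t ^ (m + 1) • NB n B (m + 1)) := by
      intro m hm
      rw [NB_succ_rel B (Finset.mem_range.mp hm), smul_add, smul_smul, mul_comm (t ^ (m+1)),
        Matrix.mul_smul]
    rw [Finset.sum_congr rfl this, Finset.sum_add_distrib, ← Finset.sum_smul, ← Finset.mul_sum,
      hshift]
  have heval : (Matrix.charpoly B).eval t = ∑ m ∈ Finset.range (n + 1), c m * t ^ m := by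
    rw [Polynomial.eval_eq_sum_range, charpoly_natDeg hn]
  rw [hsub, hexp, heval, Finset.sum_range_succ']
  rw [Matrix.mul_sub, B_mul_NB_zero hn B]
  simp only [pow_zero, mul_one]
  rw [add_smul]
  abel

lemma adj_eq (hn : 0 < n) (B : Matrix (Fin n) (Fin n) ℂ) (t : ℂ)
    (hdet : (t • (1 : Matrix (Fin n) (Fin n) ℂ) - B).det = (Matrix.charpoly B).eval t)
    (ht : (Matrix.charpoly B).eval t ≠ 0) :
    (t • (1 : Matrix (Fin n) (Fin n) ℂ) - B).adjugate
      = ∑ m ∈ Finset.range n, t ^ m • NB n B m := by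
  set A := t • (1 : Matrix (Fin n) (Fin n) ℂ) - B with hA
  have hu : IsUnit A.det := by rw [hdet]; exact Ne.isUnit ht
  have h1 : A * A.adjugate = A.det • 1 := Matrix.mul_adjugate A
  have h2 : A * (∑ m ∈ Finset.range n, t ^ m • NB n B m) = A.det • 1 := by
    rw [hdet]; exact key_mul hn B t
  have h3 : A⁻¹ * (A * A.adjugate) = A⁻¹ * (A * (∑ m ∈ Finset.range n, t ^ m • NB n B m)) := by
    rw [h1, h2]
  rwa [← Matrix.mul_assoc, ← Matrix.mul_assoc, Matrix.nonsing_inv_mul A hu, Matrix.one_mul,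
    Matrix.one_mul] at h3

lemma charpoly_natDeg' (M : Matrix (Fin n) (Fin n) ℂ) :
    (Matrix.charpoly M).natDegree = n := by
  simp [Matrix.charpoly_natDegree_eq_dim]

lemma exists_good_points (B : Matrix (Fin n) (Fin n) ℂ) :
    ∃ s : Finset ℂ, s.card = n + 1 ∧ ∀ t ∈ s, (Matrix.charpoly B).eval t ≠ 0 := by
  have hfin : Set.Finite {x : ℂ | (Matrix.charpoly B).IsRoot x} :=
    Polynomial.finite_setOf_isRoot (Matrix.charpoly_monic B).ne_zero
  have hinf : ({x : ℂ | (Matrix.charpoly B).IsRoot x}ᶜ).Infinite :=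
    Set.Finite.infinite_compl hfin
  obtain ⟨s, hsub, hcard⟩ := hinf.exists_subset_card_eq (n + 1)
  exact ⟨s, hcard, fun t ht => hsub ht⟩

lemma coeff_interp {s : Finset ℂ} (hcard : s.card = n + 1)
    (M : Matrix (Fin n) (Fin n) ℂ) (k : ℕ) :
    (Matrix.charpoly M).coeff k
      = ∑ t ∈ s, (Lagrange.basis s id t).coeff k * (Matrix.charpoly M).eval t := by
  have hdeg : (Matrix.charpoly M).degree < s.card := by
    rw [hcard]
    exact lt_of_le_of_lt Polynomial.degree_le_natDegree
      (by rw [charpoly_natDeg']; exact_mod_cast Nat.lt_succ_self n)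
  have h := Lagrange.eq_interpolate (f := Matrix.charpoly M) (v := id)
    (Set.injOn_id _) hdeg
  have h2 := congrArg (fun p => Polynomial.coeff p k) h
  simp only [Lagrange.interpolate_apply, Polynomial.finset_sum_coeff,
    Polynomial.coeff_C_mul, id_eq] at h2
  rw [h2]
  exact Finset.sum_congr rfl fun t _ => mul_comm _ _

lemma interp_delta {s : Finset ℂ} (hcard : s.card = n + 1) {m : ℕ} (hm : m < n + 1) (k : ℕ) :
    ∑ t ∈ s, (Lagrange.basis s id t).coeff k * t ^ m = if k = m then 1 else 0 := by
  have hdeg : ((X : ℂ[X]) ^ m).degree < s.card := by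
    rw [hcard, Polynomial.degree_X_pow]
    exact_mod_cast hm
  have h := Lagrange.eq_interpolate (f := (X : ℂ[X]) ^ m) (v := id) (Set.injOn_id _) hdeg
  have h2 := congrArg (fun p => Polynomial.coeff p k) h
  simp only [Lagrange.interpolate_apply, Polynomial.finset_sum_coeff,
    Polynomial.coeff_C_mul, id_eq, Polynomial.eval_pow, Polynomial.eval_X,
    Polynomial.coeff_X_pow] at h2
  rw [h2]
  exact Finset.sum_congr rfl fun t _ => mul_comm _ _

lemma sum_adj (hn : 0 < n) (B : Matrix (Fin n) (Fin n) ℂ) {s : Finset ℂ}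
    (hcard : s.card = n + 1) (hs : ∀ t ∈ s, (Matrix.charpoly B).eval t ≠ 0)
    {k : ℕ} (hk : k < n) :
    ∑ t ∈ s, (Lagrange.basis s id t).coeff k •
      (t • (1 : Matrix (Fin n) (Fin n) ℂ) - B).adjugate = NB n B k := by
  have h1 : ∀ t ∈ s, (Lagrange.basis s id t).coeff k •
      (t • (1 : Matrix (Fin n) (Fin n) ℂ) - B).adjugate
      = ∑ m ∈ Finset.range n, ((Lagrange.basis s id t).coeff k * t ^ m) • NB n B m := by
    intro t ht
    rw [adj_eq hn B t (eval_charpoly' B t).symm (hs t ht), Finset.smul_sum]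
    exact Finset.sum_congr rfl fun m _ => by rw [smul_smul]
  rw [Finset.sum_congr rfl h1, Finset.sum_comm]
  have h2 : ∀ m ∈ Finset.range n,
      ∑ t ∈ s, ((Lagrange.basis s id t).coeff k * t ^ m) • NB n B m
      = (if k = m then (1:ℂ) else 0) • NB n B m := by
    intro m hm
    rw [← Finset.sum_smul, interp_delta hcard (lt_trans (Finset.mem_range.mp hm) (Nat.lt_succ_self n)) k]
  rw [Finset.sum_congr rfl h2]
  simp [Finset.sum_ite_eq, hk]

lemma hasFDerivAt_coeff_charpoly (hn : 0 < n) (B : Matrix (Fin n) (Fin n) ℂ)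
    {k : ℕ} (hk : k < n) :
    HasFDerivAt (fun M : Matrix (Fin n) (Fin n) ℂ => (Matrix.charpoly M).coeff k)
      (-(LinearMap.toContinuousLinearMap (trFL n (NB n B k)))) B := by
  obtain ⟨s, hcard, hs⟩ := exists_good_points B
  have hfun : (fun M : Matrix (Fin n) (Fin n) ℂ => (Matrix.charpoly M).coeff k)
      = fun M => ∑ t ∈ s, (Lagrange.basis s id t).coeff k *
          (t • (1 : Matrix (Fin n) (Fin n) ℂ) - M).det := by
    funext M
    rw [coeff_interp hcard M k]
    exact Finset.sum_congr rfl fun t _ => by rw [eval_charpoly']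
  rw [hfun]
  have hsum := HasFDerivAt.fun_sum (fun t (ht : t ∈ s) =>
    (hasFDerivAt_det_sub (t • (1 : Matrix (Fin n) (Fin n) ℂ)) B).const_mul
      ((Lagrange.basis s id t).coeff k))
  refine hsum.congr_fderiv (Eq.symm ?_)
  ext X
  change -Matrix.trace (NB n B k * X) = _
  refine Eq.trans ?_ (map_sum (ContinuousLinearMap.apply ℂ ℂ X) _ s).symm
  change _ = ∑ t ∈ s, (Lagrange.basis s id t).coeff k *
    -Matrix.trace ((t • (1 : Matrix (Fin n) (Fin n) ℂ) - B).adjugate * X)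
  simp only [ContinuousLinearMap.neg_apply, LinearMap.coe_toContinuousLinearMap', trFL_apply,
    ContinuousLinearMap.coe_sum', Finset.sum_apply, ContinuousLinearMap.coe_smul', Pi.smul_apply,
    smul_eq_mul, mul_neg]
  rw [← sum_adj hn B hcard hs hk, Finset.sum_mul]
  simp only [Matrix.smul_mul, Matrix.trace_sum, Matrix.trace_smul, smul_eq_mul]
  exact (Finset.sum_neg_distrib _).symm

lemma hasFDerivAt_symmPi (hn : 0 < n) (B : Matrix (Fin n) (Fin n) ℂ) :
    HasFDerivAt (symmPi n)
      (LinearMap.toContinuousLinearMap (LinearMap.pi fun j : Fin n =>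
        ((-1 : ℂ) ^ ((j : ℕ))) • trFL n (NB n B (n - 1 - (j : ℕ))))) B := by
  set D := LinearMap.pi fun j : Fin n =>
    ((-1 : ℂ) ^ ((j : ℕ))) • trFL n (NB n B (n - 1 - (j : ℕ))) with hD
  apply hasFDerivAt_pi''
  intro j
  have hk : n - ((j : ℕ) + 1) < n := by omega
  have h := (hasFDerivAt_coeff_charpoly hn B hk).const_mul ((-1 : ℂ) ^ ((j : ℕ) + 1))
  have hfun : (fun M : Matrix (Fin n) (Fin n) ℂ =>
      (-1 : ℂ) ^ ((j : ℕ) + 1) * (Matrix.charpoly M).coeff (n - ((j : ℕ) + 1)))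
      = fun M => symmPi n M j := rfl
  rw [hfun] at h
  refine h.congr_fderiv (Eq.symm ?_)
  ext X
  change (-1 : ℂ) ^ (j : ℕ) * Matrix.trace (NB n B (n - 1 - (j : ℕ)) * X)
    = (-1 : ℂ) ^ ((j : ℕ) + 1) * -Matrix.trace (NB n B (n - ((j : ℕ) + 1)) * X)
  simp only [hD, ContinuousLinearMap.coe_comp', Function.comp_apply,
    LinearMap.coe_toContinuousLinearMap', ContinuousLinearMap.proj_apply,
    LinearMap.pi_apply, LinearMap.smul_apply, trFL_apply, smul_eq_mul,
    ContinuousLinearMap.coe_smul', Pi.smul_apply, ContinuousLinearMap.neg_apply, mul_neg]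
  have h1 : n - 1 - (j : ℕ) = n - ((j : ℕ) + 1) := by omega
  rw [h1, pow_succ]
  ring

lemma span_NB_eq_span_pow (hn : 0 < n) (B : Matrix (Fin n) (Fin n) ℂ) :
    Submodule.span ℂ (Set.range fun k : Fin n => NB n B (k : ℕ))
      = Submodule.span ℂ (Set.range fun k : Fin n => B ^ (k : ℕ)) := by
  apply le_antisymm
  · rw [Submodule.span_le]
    rintro _ ⟨k, rfl⟩
    show NB n B (k : ℕ) ∈ _
    rw [NB]
    apply Submodule.sum_mem
    intro i hi
    apply Submodule.smul_mem
    have hilt : i < n := by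
      have := Finset.mem_range.mp hi; omega
    exact Submodule.subset_span ⟨⟨i, hilt⟩, rfl⟩
  · rw [Submodule.span_le]
    rintro _ ⟨k, rfl⟩
    have claim : ∀ m, m < n → B ^ m ∈
        Submodule.span ℂ (Set.range fun k : Fin n => NB n B (k : ℕ)) := by
      intro m
      induction m using Nat.strong_induction_on with
      | _ m ih =>
        intro hm
        have hNB : NB n B (n - 1 - m)
            = (∑ i ∈ Finset.range m, (Matrix.charpoly B).coeff (n - m + i) • B ^ i) + B ^ m := by
          rw [NB]
          have h1 : n - (n - 1 - m) = m + 1 := by omega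
          rw [h1, Finset.sum_range_succ]
          congr 1
          · refine Finset.sum_congr rfl fun i _ => ?_
            congr 2
            omega
          · have h2 : n - 1 - m + 1 + m = n := by omega
            rw [h2]
            have h3 : (Matrix.charpoly B).coeff n = 1 := by
              have := (Matrix.charpoly_monic B).coeff_natDegree
              rwa [charpoly_natDeg' B] at this
            rw [h3, one_smul]
        have heq : B ^ m = NB n B (n - 1 - m)
            - ∑ i ∈ Finset.range m, (Matrix.charpoly B).coeff (n - m + i) • B ^ i := by
          rw [hNB]; abel
        rw [heq]
        apply Submodule.sub_mem
        · refine Submodule.subset_span ⟨⟨n - 1 - m, by omega⟩, rfl⟩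
        · exact Submodule.sum_mem _ fun i hi => Submodule.smul_mem _ _
            (ih i (Finset.mem_range.mp hi) (lt_trans (Finset.mem_range.mp hi) hm))
    exact claim (k : ℕ) k.2

end Aux

/-- For every matrix B in the spectral unit ball (spectral radius r(B) < 1), the rank of the
derivative π'(B) : ℂ^{n×n} → ℂ^n of the symmetrization map at B equals the degree of the
minimal polynomial of B. -/
theorem rank_fderiv_symmPi_eq_natDegree_minpoly
    (n : ℕ) (hn : 0 < n) (B : Matrix (Fin n) (Fin n) ℂ)
    (hB : spectralRadius ℂ B < 1) :
    Module.finrank ℂ (LinearMap.range (fderiv ℂ (symmPi n) B).toLinearMap)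
      = (minpoly ℂ B).natDegree := by
  have hfd := (hasFDerivAt_symmPi hn B).fderiv
  rw [hfd]
  set A : Fin n → Matrix (Fin n) (Fin n) ℂ := fun j => NB n B (n - 1 - (j : ℕ)) with hA
  set D : Matrix (Fin n) (Fin n) ℂ →ₗ[ℂ] (Fin n → ℂ) :=
    LinearMap.pi fun j : Fin n => ((-1 : ℂ) ^ ((j : ℕ))) • trFL n (A j) with hD
  have hcoe : (LinearMap.toContinuousLinearMap D).toLinearMap = D := by
    ext X j; rfl
  rw [hcoe]
  -- peel off the invertible diagonal sign factor
  set E : (Fin n → ℂ) ≃ₗ[ℂ] (Fin n → ℂ) :=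
    LinearEquiv.piCongrRight fun j : Fin n =>
      LinearEquiv.smulOfNeZero ℂ ℂ ((-1 : ℂ) ^ ((j : ℕ)))
        (pow_ne_zero _ (by norm_num)) with hE
  set Ψ : Matrix (Fin n) (Fin n) ℂ →ₗ[ℂ] (Fin n → ℂ) :=
    LinearMap.pi fun j : Fin n => trFL n (A j) with hΨ
  have hcomp : D = (E : (Fin n → ℂ) →ₗ[ℂ] (Fin n → ℂ)).comp Ψ := by
    ext X j
    rfl
  rw [hcomp, LinearMap.range_comp]
  rw [LinearEquiv.finrank_map_eq]
  rw [part2 A]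
  have hrange : Set.range A = Set.range fun k : Fin n => NB n B (k : ℕ) := by
    ext x
    constructor
    · rintro ⟨j, rfl⟩
      exact ⟨⟨n - 1 - (j : ℕ), by omega⟩, rfl⟩
    · rintro ⟨k, rfl⟩
      refine ⟨⟨n - 1 - (k : ℕ), by omega⟩, ?_⟩
      show NB n B (n - 1 - (n - 1 - (k : ℕ))) = NB n B (k : ℕ)
      have hk : (k : ℕ) < n := k.2
      have harg : n - 1 - (n - 1 - (k : ℕ)) = (k : ℕ) := by omega
      rw [harg]
  rw [hrange, span_NB_eq_span_pow hn B]
  exact part1 n hn B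
end

section
/- Let n be a positive integer, B ∈ ℂ^{n×n}, and let λ be an eigenvalue of B. Let m_λ be the algebraic multiplicity of λ (the multiplicity of λ as a root of the characteristic polynomial of B) and s_λ the multiplicity of λ as a root of the minimal polynomial of B. Then for every integer k with 0 ≤ k ≤ m_λ − s_λ − 1 and every M ∈ ℂ^{n×n}, the function ζ ↦ P_{B+ζM}^{(k)}(λ) (the k-th derivative with respect to t of the characteristic polynomial P_{B+ζM}(t) = det(tI − (B+ζM)), evaluated at t = λ) has vanishing derivative with respect to ζ at ζ = 0. -/
open Matrix Polynomial

/-- The linear (first-order) coefficient of `det (A + X • D)` is `trace (adjugate A * D)`. -/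
lemma coeff_one_det_aux {R : Type*} [CommRing R] {N : Type*} [DecidableEq N] [Fintype N]
    (A D : Matrix N N R) :
    ((A.map Polynomial.C + (Polynomial.X : Polynomial R) • D.map Polynomial.C).det).coeff 1
      = Matrix.trace (A.adjugate * D) := by
  classical
  set P : Finset N → Matrix N N R := fun s => s.piecewise D A with hP
  have hdef : ∀ (Z : Matrix N N (Polynomial R)), Z.det = Matrix.detRowAlternating Z :=
    fun _ => rfl
  have hrows : (A.map Polynomial.C + (Polynomial.X : Polynomial R) • D.map Polynomial.C)
      = ((fun i => (Polynomial.X : Polynomial R) • (D.map Polynomial.C) i)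
          + (fun i => (A.map Polynomial.C) i) : N → N → Polynomial R) := by
    funext i j
    simp [Matrix.add_apply, Matrix.smul_apply, add_comm]
  have hterm : ∀ s : Finset N,
      Matrix.detRowAlternating
        (s.piecewise (fun i => (Polynomial.X : Polynomial R) • (D.map Polynomial.C) i)
          (fun i => (A.map Polynomial.C) i))
        = (Polynomial.X : Polynomial R) ^ s.card * Polynomial.C ((P s).det) := by
    intro s
    have h1 : (s.piecewise (fun i => (Polynomial.X : Polynomial R) • (D.map Polynomial.C) i)
          (fun i => (A.map Polynomial.C) i))
        = s.piecewise
            (fun i => (Polynomial.X : Polynomial R) • ((P s).map Polynomial.C) i)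
            ((P s).map Polynomial.C) := by
      funext i
      by_cases h : i ∈ s
      · simp only [Finset.piecewise_eq_of_mem _ _ _ h]
        funext j
        simp [hP, Matrix.map_apply, Matrix.map, Finset.piecewise, h, Polynomial.X_mul_C]
      · simp only [Finset.piecewise_eq_of_notMem _ _ _ h]
        funext j
        simp [hP, Matrix.map_apply, Matrix.map, Finset.piecewise, h]
    rw [h1]
    refine ((Matrix.detRowAlternating
      : (N → Polynomial R) [⋀^N]→ₗ[Polynomial R] (Polynomial R)).toMultilinearMap.map_piecewise_smul
        (fun _ : N => (Polynomial.X : Polynomial R)) (fun i => ((P s).map Polynomial.C) i) s).trans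
        ?_
    rw [Finset.prod_const, smul_eq_mul]
    congr 1
    show ((P s).map Polynomial.C).det = Polynomial.C (P s).det
    rw [RingHom.map_det, RingHom.mapMatrix_apply]
  have e1 : (A.map Polynomial.C + (Polynomial.X : Polynomial R) • D.map Polynomial.C).det
      = ∑ s : Finset N, (Polynomial.X : Polynomial R) ^ s.card
          * Polynomial.C ((P s).det) := by
    rw [hdef, hrows]
    refine ((Matrix.detRowAlternating
      : (N → Polynomial R) [⋀^N]→ₗ[Polynomial R] (Polynomial R)).toMultilinearMap.map_add_univ
        (fun i => (Polynomial.X : Polynomial R) • (D.map Polynomial.C) i)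
        (fun i => (A.map Polynomial.C) i)).trans ?_
    exact Finset.sum_congr rfl fun s _ => hterm s
  rw [e1, Polynomial.finset_sum_coeff]
  have e2 : ∀ s : Finset N,
      ((Polynomial.X : Polynomial R) ^ s.card * Polynomial.C ((P s).det)).coeff 1
      = if s.card = 1 then (P s).det else 0 := by
    intro s
    rw [mul_comm, Polynomial.coeff_C_mul, Polynomial.coeff_X_pow]
    by_cases h : s.card = 1
    · simp [h]
    · simp [h, Ne.symm, eq_comm]
  simp only [e2]
  rw [← Finset.sum_filter]
  have e3 : Finset.univ.filter (fun s : Finset N => s.card = 1)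
      = Finset.univ.image (fun i : N => ({i} : Finset N)) := by
    ext s
    simp [Finset.card_eq_one, eq_comm]
  rw [e3, Finset.sum_image (fun x _ y _ h => Finset.singleton_injective h)]
  have e4 : ∀ i : N, P {i} = A.updateRow i (D i) := by
    intro i
    funext a
    rcases eq_or_ne a i with rfl | h
    · rw [hP]
      show ({a} : Finset N).piecewise D A a = _
      simp only [Finset.piecewise, Finset.mem_singleton, ite_true]
      rw [Matrix.updateRow_self]
    · rw [hP]
      show ({i} : Finset N).piecewise D A a = _
      simp only [Finset.piecewise, Finset.mem_singleton, h, ite_false]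
      rw [Matrix.updateRow_ne h]
  have e5 : ∀ i : N, (A.updateRow i (D i)).det = ∑ j, A.adjugate j i * D i j := by
    intro i
    rw [← Matrix.det_transpose, ← Matrix.updateCol_transpose, ← Matrix.cramer_apply,
      Matrix.cramer_eq_adjugate_mulVec]
    simp only [Matrix.mulVec, dotProduct, ← Matrix.adjugate_transpose,
      Matrix.transpose_apply]
  have e6 : Matrix.trace (A.adjugate * D) = ∑ j, ∑ i, A.adjugate j i * D i j := by
    simp [Matrix.trace, Matrix.diag, Matrix.mul_apply]
  simp only [e4, e5, e6]
  exact (Finset.sum_comm)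

/-- Evaluation of the "coefficient-wise image under a linear functional" polynomial. -/
lemma psi_eval (Φ : (Polynomial ℂ) →ₗ[ℂ] ℂ) (W : Polynomial (Polynomial ℂ)) (ζ : ℂ) :
    (W.sum fun j a => Polynomial.C (Φ a) * Polynomial.X ^ j).eval ζ
      = Φ (W.eval (Polynomial.C ζ)) := by
  induction W using Polynomial.induction_on' with
  | add p q hp hq =>
      rw [Polynomial.sum_add_index _ _ _ (fun i => by simp)
        (fun a b₁ b₂ => by rw [map_add, Polynomial.C_add, add_mul]),
        Polynomial.eval_add, Polynomial.eval_add, map_add, hp, hq]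
  | monomial j a =>
      rw [Polynomial.sum_monomial_index _ _ (by simp)]
      rw [Polynomial.eval_mul, Polynomial.eval_C, Polynomial.eval_pow, Polynomial.eval_X,
        Polynomial.eval_monomial, ← Polynomial.C_pow, mul_comm a, ← Polynomial.smul_eq_C_mul,
        LinearMap.map_smul, smul_eq_mul, mul_comm]

/-- Coefficients of the "coefficient-wise image under a linear functional" polynomial. -/
lemma psi_coeff (Φ : (Polynomial ℂ) →ₗ[ℂ] ℂ) (W : Polynomial (Polynomial ℂ)) (m : ℕ) :
    (W.sum fun j a => Polynomial.C (Φ a) * Polynomial.X ^ j).coeff m = Φ (W.coeff m) := by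
  induction W using Polynomial.induction_on' with
  | add p q hp hq =>
      rw [Polynomial.sum_add_index _ _ _ (fun i => by simp)
        (fun a b₁ b₂ => by rw [map_add, Polynomial.C_add, add_mul]),
        Polynomial.coeff_add, Polynomial.coeff_add, map_add, hp, hq]
  | monomial j a =>
      rw [Polynomial.sum_monomial_index _ _ (by simp)]
      rw [Polynomial.coeff_C_mul, Polynomial.coeff_X_pow, Polynomial.coeff_monomial]
      by_cases h : m = j
      · simp [h]
      · simp [h, Ne.symm h]

/-- Let B ∈ ℂ^{n×n}, λ an eigenvalue of B, m_λ the algebraic multiplicity of λ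
(multiplicity of λ as a root of the characteristic polynomial) and s_λ its multiplicity
as a root of the minimal polynomial. Then for every 0 ≤ k ≤ m_λ − s_λ − 1 and every
M ∈ ℂ^{n×n}, the function ζ ↦ P_{B+ζM}^{(k)}(λ) has vanishing derivative at ζ = 0. -/
theorem deriv_charpoly_derivative_eval_eq_zero
    (n : ℕ) (hn : 0 < n) (B : Matrix (Fin n) (Fin n) ℂ) (lam : ℂ)
    (hlam : lam ∈ spectrum ℂ B) (k : ℕ)
    (hk : k + (minpoly ℂ B).rootMultiplicity lam + 1
        ≤ (Matrix.charpoly B).rootMultiplicity lam)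
    (M : Matrix (Fin n) (Fin n) ℂ) :
    deriv (fun ζ : ℂ =>
        (Polynomial.derivative^[k] (Matrix.charpoly (B + ζ • M))).eval lam) 0 = 0 := by
  classical
  set E : Matrix (Fin n) (Fin n) (Polynomial ℂ) := charmatrix B with hE
  set D : Matrix (Fin n) (Fin n) (Polynomial ℂ) := -(M.map Polynomial.C) with hD
  set Q : Polynomial (Polynomial ℂ) :=
    (E.map Polynomial.C + (Polynomial.X : Polynomial (Polynomial ℂ)) • D.map Polynomial.C).det
    with hQ
  set Φ : Polynomial ℂ →ₗ[ℂ] ℂ :=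
    (Polynomial.leval lam).comp
      ((Polynomial.derivative : Polynomial ℂ →ₗ[ℂ] Polynomial ℂ) ^ k) with hΦ
  have hΦ_apply : ∀ p : Polynomial ℂ,
      Φ p = ((⇑Polynomial.derivative)^[k] p).eval lam := by
    intro p
    simp [hΦ, Module.End.pow_apply, Polynomial.leval_apply]
  -- Step 1: specialization of Q at ζ
  have hQeval : ∀ ζ : ℂ, Q.eval (Polynomial.C ζ) = Matrix.charpoly (B + ζ • M) := by
    intro ζ
    have h1 : Q.eval (Polynomial.C ζ)
        = Polynomial.evalRingHom (Polynomial.C ζ : Polynomial ℂ) Q := rfl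
    rw [h1, hQ, RingHom.map_det, RingHom.mapMatrix_apply]
    show ((E.map Polynomial.C + (Polynomial.X : Polynomial (Polynomial ℂ)) • D.map Polynomial.C).map
        (Polynomial.evalRingHom (Polynomial.C ζ))).det = (charmatrix (B + ζ • M)).det
    congr 1
    ext i j
    rcases eq_or_ne i j with rfl | hij
    · simp [hE, hD, Matrix.add_apply, Matrix.smul_apply, Matrix.map_apply, smul_eq_mul,
        charmatrix_apply_eq, Matrix.add_apply, Matrix.smul_apply, mul_comm]
      ring
    · simp [hE, hD, Matrix.add_apply, Matrix.smul_apply, Matrix.map_apply, smul_eq_mul,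
        charmatrix_apply_ne _ _ _ hij, mul_comm]
      ring
  -- Step 2: rewrite the function as evaluation of a fixed polynomial
  have hfun : (fun ζ : ℂ =>
        (Polynomial.derivative^[k] (Matrix.charpoly (B + ζ • M))).eval lam)
      = fun ζ : ℂ => (Q.sum fun j a => Polynomial.C (Φ a) * Polynomial.X ^ j).eval ζ := by
    funext ζ
    rw [psi_eval, hQeval, hΦ_apply]
  rw [hfun, Polynomial.deriv, ← Polynomial.coeff_zero_eq_eval_zero,
    Polynomial.coeff_derivative, psi_coeff]
  -- Step 3: identify Q.coeff 1 with a trace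
  have hcoeff : Q.coeff 1 = Matrix.trace (E.adjugate * D) := coeff_one_det_aux E D
  -- Step 4: matrix identity  m(t) • 1 = E * Wm
  obtain ⟨Wm, hWm⟩ : ∃ Wm : Matrix (Fin n) (Fin n) (Polynomial ℂ),
      (minpoly ℂ B) • (1 : Matrix (Fin n) (Fin n) (Polynomial ℂ)) = E * Wm := by
    obtain ⟨W2, hW2⟩ := Polynomial.sub_dvd_eval_sub
      (Polynomial.C (Polynomial.X : Polynomial ℂ)) (Polynomial.X : Polynomial (Polynomial ℂ))
      ((minpoly ℂ B).map (algebraMap ℂ (Polynomial (Polynomial ℂ))))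
    set φ : Polynomial (Polynomial ℂ) →ₐ[Polynomial ℂ] Matrix (Fin n) (Fin n) (Polynomial ℂ) :=
      Polynomial.aeval (B.map Polynomial.C : Matrix (Fin n) (Fin n) (Polynomial ℂ)) with hφ
    refine ⟨φ W2, ?_⟩
    have h3 := congrArg φ hW2
    rw [_root_.map_mul, _root_.map_sub, _root_.map_sub] at h3
    have hc : φ (Polynomial.C (Polynomial.X : Polynomial ℂ))
        = algebraMap (Polynomial ℂ) (Matrix (Fin n) (Fin n) (Polynomial ℂ))
            (Polynomial.X : Polynomial ℂ) := by
      rw [hφ, Polynomial.aeval_C]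
    have hx : φ (Polynomial.X : Polynomial (Polynomial ℂ))
        = B.map Polynomial.C := by
      rw [hφ, Polynomial.aeval_X]
    have heval1 : φ (Polynomial.eval (Polynomial.C (Polynomial.X : Polynomial ℂ))
        ((minpoly ℂ B).map (algebraMap ℂ (Polynomial (Polynomial ℂ)))))
        = (minpoly ℂ B) • (1 : Matrix (Fin n) (Fin n) (Polynomial ℂ)) := by
      rw [Polynomial.eval_map, ← Polynomial.aeval_def]
      rw [show φ ((Polynomial.aeval (Polynomial.C (Polynomial.X : Polynomial ℂ)))
            (minpoly ℂ B))
          = Polynomial.aeval (φ (Polynomial.C (Polynomial.X : Polynomial ℂ))) (minpoly ℂ B) from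
        (Polynomial.aeval_algHom_apply (φ.restrictScalars ℂ) _ _).symm]
      rw [hc, Polynomial.aeval_algebraMap_apply, Polynomial.aeval_X_left_apply,
        Algebra.algebraMap_eq_smul_one]
    have heval2 : φ (Polynomial.eval (Polynomial.X : Polynomial (Polynomial ℂ))
        ((minpoly ℂ B).map (algebraMap ℂ (Polynomial (Polynomial ℂ)))))
        = 0 := by
      rw [Polynomial.eval_map, ← Polynomial.aeval_def]
      rw [show φ ((Polynomial.aeval (Polynomial.X : Polynomial (Polynomial ℂ)))
            (minpoly ℂ B))
          = Polynomial.aeval (φ (Polynomial.X : Polynomial (Polynomial ℂ))) (minpoly ℂ B) from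
        (Polynomial.aeval_algHom_apply (φ.restrictScalars ℂ) _ _).symm]
      rw [hx]
      have hψ : (B.map Polynomial.C : Matrix (Fin n) (Fin n) (Polynomial ℂ))
          = (Algebra.ofId ℂ (Polynomial ℂ)).mapMatrix B := by
        ext i j
        simp [AlgHom.mapMatrix_apply, Matrix.map_apply, Algebra.ofId_apply,
          Polynomial.algebraMap_eq]
      rw [hψ, Polynomial.aeval_algHom_apply, minpoly.aeval, map_zero]
    rw [heval1, heval2, sub_zero] at h3
    have hE' : φ (Polynomial.C (Polynomial.X : Polynomial ℂ))
        - φ (Polynomial.X : Polynomial (Polynomial ℂ)) = E := by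
      rw [hc, hx, hE]
      show _ = Matrix.scalar (Fin n) (Polynomial.X : Polynomial ℂ)
          - (Polynomial.C : ℂ →+* Polynomial ℂ).mapMatrix B
      congr 1
    rw [hE'] at h3
    exact h3
  -- Step 5: divisibility
  have hkey : (minpoly ℂ B) • E.adjugate = (Matrix.charpoly B) • Wm := by
    calc (minpoly ℂ B) • E.adjugate = E.adjugate * ((minpoly ℂ B) • 1) := by
          rw [Matrix.mul_smul, mul_one]
      _ = E.adjugate * (E * Wm) := by rw [hWm]
      _ = (E.adjugate * E) * Wm := by rw [Matrix.mul_assoc]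
      _ = (E.det • (1 : Matrix (Fin n) (Fin n) (Polynomial ℂ))) * Wm := by
          rw [Matrix.adjugate_mul]
      _ = (Matrix.charpoly B) • Wm := by rw [Matrix.smul_mul, one_mul]; rfl
  set T : Polynomial ℂ := Matrix.trace (E.adjugate * D) with hT
  have hdvd : Matrix.charpoly B ∣ (minpoly ℂ B) * T := by
    refine ⟨Matrix.trace (Wm * D), ?_⟩
    have h4 := congrArg (fun Z : Matrix (Fin n) (Fin n) (Polynomial ℂ) =>
      Matrix.trace (Z * D)) hkey
    simpa [Matrix.smul_mul, Matrix.trace_smul, smul_eq_mul, hT] using h4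
  -- Step 6: conclude
  have hroot : ((⇑Polynomial.derivative)^[k] T).eval lam = 0 := by
    rcases eq_or_ne T 0 with h0 | h0
    · simp [h0]
    · have hm0 : minpoly ℂ B ≠ 0 := minpoly.ne_zero (Matrix.isIntegral B)
      have hmT : (minpoly ℂ B) * T ≠ 0 := mul_ne_zero hm0 h0
      have h1 : (Matrix.charpoly B).rootMultiplicity lam
          ≤ ((minpoly ℂ B) * T).rootMultiplicity lam := by
        rw [Polynomial.le_rootMultiplicity_iff hmT]
        exact dvd_trans (Polynomial.pow_rootMultiplicity_dvd _ _) hdvd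
      rw [Polynomial.rootMultiplicity_mul hmT] at h1
      have h2 : k < T.rootMultiplicity lam := by omega
      exact Polynomial.isRoot_iterate_derivative_of_lt_rootMultiplicity h2
  rw [hcoeff, hΦ_apply, hroot]
  simp
end

section
/- Let n be a positive integer, B ∈ ℂ^{n×n}, and let π : ℂ^{n×n} → ℂ^n be the symmetrization map π(M) = (σ_1(M), …, σ_n(M)). Define v : ℂ → ℂ^n by v(t) = (−t^{n−1}, t^{n−2}, −t^{n−3}, …, (−1)^{n−1} t, (−1)^n), i.e., v(t)_j = (−1)^j t^{n−j} for 1 ≤ j ≤ n, and let v^{(k)} be its k-th derivative. Then for every eigenvalue λ of B, every integer k with 0 ≤ k ≤ m_λ − s_λ − 1 (where m_λ is the algebraic multiplicity of λ and s_λ is the multiplicity of λ as a root of the minimal polynomial of B), and every M ∈ ℂ^{n×n}, one has v^{(k)}(λ) · (π'(B)M) = 0, where u · w = Σ_{j=1}^n u_j w_j. In other words, the image of π'(B) is annihilated by each of the linear functionals w ↦ v^{(k)}(λ)·w. -/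
open Matrix Polynomial

attribute [local instance] Matrix.normedAddCommGroup Matrix.normedSpace

/-- `vcurve n k t` is the componentwise k-th derivative v^{(k)}(t) of the curve
v : ℂ → ℂ^n defined by v(t)_j = (−1)^j t^{n−j} for 1 ≤ j ≤ n
(so the zero-based component `j : Fin n` corresponds to 1-based index j+1). -/
noncomputable def vcurve (n k : ℕ) (t : ℂ) : Fin n → ℂ :=
  fun j => iteratedDeriv k (fun s : ℂ => (-1 : ℂ) ^ ((j : ℕ) + 1) * s ^ (n - ((j : ℕ) + 1))) t

namespace VcurveAux

/-- iterated derivative of a multiple root vanishes -/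
lemma eval_iterate_derivative_eq_zero {k : ℕ} {p : ℂ[X]} {a : ℂ}
    (h : (X - C a) ^ (k + 1) ∣ p) :
    (Polynomial.derivative^[k] p).eval a = 0 := by
  induction k generalizing p with
  | zero =>
    have h1 : (X - C a) ∣ p := by simpa using h
    simpa [Polynomial.IsRoot] using dvd_iff_isRoot.mp h1
  | succ k ih =>
    obtain ⟨q, rfl⟩ := h
    rw [Function.iterate_succ_apply]
    apply ih
    rw [derivative_mul, derivative_pow]
    apply dvd_add
    · apply dvd_mul_of_dvd_left
      apply dvd_mul_of_dvd_left
      apply dvd_mul_left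
    · apply dvd_mul_of_dvd_left
      exact pow_dvd_pow _ (by omega)

/-- iteratedDeriv of polynomial eval -/
lemma iteratedDeriv_polyEval (k : ℕ) (p : ℂ[X]) :
    iteratedDeriv k (fun s : ℂ => p.eval s) = fun s => (Polynomial.derivative^[k] p).eval s := by
  induction k with
  | zero => simp
  | succ k ih =>
    rw [iteratedDeriv_succ, ih]
    funext s
    rw [Function.iterate_succ_apply']
    exact (Polynomial.derivative^[k] p : Polynomial ℂ).deriv

/-- sum of coeffs against iterated derivatives of monomials -/
lemma sum_coeff_eval {n k : ℕ} {lam : ℂ} (p : ℂ[X]) (hp : ∀ e, n ≤ e → p.coeff e = 0) :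
    ∑ e ∈ Finset.range n, (Polynomial.derivative^[k] ((X : ℂ[X]) ^ e)).eval lam * p.coeff e
      = (Polynomial.derivative^[k] p).eval lam := by
  have hrep : p = ∑ e ∈ Finset.range n, Polynomial.C (p.coeff e) * X ^ e := by
    by_cases hp0 : p = 0
    · subst hp0; simp
    · have hdeg : p.natDegree < n := by
        by_contra hge
        exact hp0 (Polynomial.leadingCoeff_eq_zero.mp (hp _ (le_of_not_gt hge)))
      conv_lhs => rw [Polynomial.as_sum_range' p n hdeg]
      simp [Polynomial.C_mul_X_pow_eq_monomial]
  conv_rhs => rw [hrep]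
  have hit : ∀ q : ℂ[X], Polynomial.derivative^[k] q
      = ((Polynomial.derivative : ℂ[X] →ₗ[ℂ] ℂ[X]) ^ k) q := by
    intro q; rw [Module.End.pow_apply]
  rw [hit, map_sum]
  rw [Polynomial.eval_finset_sum]
  apply Finset.sum_congr rfl
  intro e _
  rw [← hit, Polynomial.iterate_derivative_C_mul, Polynomial.eval_mul, Polynomial.eval_C]
  ring

variable {n : ℕ}

lemma charmatrix_eq (B : Matrix (Fin n) (Fin n) ℂ) :
    charmatrix B = (X : ℂ[X]) • (1 : Matrix (Fin n) (Fin n) ℂ[X]) - B.map Polynomial.C := by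
  apply Matrix.ext; intro i j
  by_cases hij : i = j
  · subst hij
    simp [charmatrix_apply_eq, Matrix.smul_apply, Matrix.one_apply, Matrix.map_apply]
  · simp [charmatrix_apply_ne _ _ _ hij, Matrix.smul_apply, Matrix.one_apply_ne hij,
      Matrix.map_apply]

lemma exists_Q_of_aeval (B : Matrix (Fin n) (Fin n) ℂ) (p : ℂ[X])
    (hp : Polynomial.aeval B p = 0) :
    ∃ Q, p • (1 : Matrix (Fin n) (Fin n) ℂ[X]) = charmatrix B * Q := by
  classical
  refine ⟨∑ d ∈ Finset.range (p.natDegree + 1), ∑ e ∈ Finset.range d,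
    (Polynomial.C (p.coeff d) * X ^ e) • (B ^ (d - 1 - e)).map Polynomial.C, ?_⟩
  set g : ℕ → ℕ → Matrix (Fin n) (Fin n) ℂ[X] :=
    fun d e => (X ^ e : ℂ[X]) • (B ^ (d - e)).map Polynomial.C with hg
  have hterm : ∀ d e : ℕ, e < d →
      charmatrix B * ((X ^ e : ℂ[X]) • (B ^ (d - 1 - e)).map Polynomial.C)
        = g d (e + 1) - g d e := by
    intro d e hed
    rw [charmatrix_eq, sub_mul, smul_mul_assoc, one_mul, smul_smul, ← pow_succ']
    rw [mul_smul_comm, ← Matrix.map_mul]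
    have h1 : B * B ^ (d - 1 - e) = B ^ (d - e) := by
      rw [← pow_succ']
      congr 1
      omega
    have h2 : d - (e + 1) = d - 1 - e := by omega
    rw [h1, hg]
    simp only [h2]
  have hQ : charmatrix B * (∑ d ∈ Finset.range (p.natDegree + 1), ∑ e ∈ Finset.range d,
        (Polynomial.C (p.coeff d) * X ^ e) • (B ^ (d - 1 - e)).map Polynomial.C)
      = ∑ d ∈ Finset.range (p.natDegree + 1),
          Polynomial.C (p.coeff d) • ((X ^ d : ℂ[X]) • 1 - (B ^ d).map Polynomial.C) := by
    rw [Finset.mul_sum]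
    apply Finset.sum_congr rfl
    intro d _
    rw [Finset.mul_sum]
    have hco : ∀ e ∈ Finset.range d,
        charmatrix B * ((Polynomial.C (p.coeff d) * X ^ e) • (B ^ (d - 1 - e)).map Polynomial.C)
          = Polynomial.C (p.coeff d) • (g d (e + 1) - g d e) := by
      intro e he
      rw [mul_smul, mul_smul_comm, hterm d e (Finset.mem_range.mp he)]
    rw [Finset.sum_congr rfl hco, ← Finset.smul_sum, Finset.sum_range_sub]
    congr 1
    rw [hg]
    simp
  rw [hQ]
  have hrepr : ∑ d ∈ Finset.range (p.natDegree + 1), Polynomial.C (p.coeff d) * X ^ d = p := by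
    conv_rhs => rw [Polynomial.as_sum_range' p (p.natDegree + 1) (Nat.lt_succ_self _)]
    simp [Polynomial.C_mul_X_pow_eq_monomial]
  have hA : ∑ d ∈ Finset.range (p.natDegree + 1),
      Polynomial.C (p.coeff d) • ((X ^ d : ℂ[X]) • (1 : Matrix (Fin n) (Fin n) ℂ[X]))
      = p • (1 : Matrix (Fin n) (Fin n) ℂ[X]) := by
    calc ∑ d ∈ Finset.range (p.natDegree + 1),
        Polynomial.C (p.coeff d) • ((X ^ d : ℂ[X]) • (1 : Matrix (Fin n) (Fin n) ℂ[X]))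
        = ∑ d ∈ Finset.range (p.natDegree + 1),
            (Polynomial.C (p.coeff d) * X ^ d) • (1 : Matrix (Fin n) (Fin n) ℂ[X]) := by
          apply Finset.sum_congr rfl
          intro d _
          rw [smul_smul]
      _ = (∑ d ∈ Finset.range (p.natDegree + 1), Polynomial.C (p.coeff d) * X ^ d)
            • (1 : Matrix (Fin n) (Fin n) ℂ[X]) := by rw [Finset.sum_smul]
      _ = p • (1 : Matrix (Fin n) (Fin n) ℂ[X]) := by rw [hrepr]
  have hB : ∑ d ∈ Finset.range (p.natDegree + 1),
      Polynomial.C (p.coeff d) • ((B ^ d).map Polynomial.C)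
        = (0 : Matrix (Fin n) (Fin n) ℂ[X]) := by
    apply Matrix.ext; intro i j
    have haev : ((Polynomial.aeval B p) i j) = 0 := by rw [hp]; rfl
    rw [Polynomial.aeval_eq_sum_range] at haev
    simp only [Matrix.sum_apply, Matrix.smul_apply, Matrix.map_apply, smul_eq_mul,
      Matrix.zero_apply, ← Polynomial.C_mul, ← map_sum]
    rw [show ∑ d ∈ Finset.range (p.natDegree + 1), p.coeff d * (B ^ d) i j
        = (∑ d ∈ Finset.range (p.natDegree + 1), p.coeff d • B ^ d) i j by
      simp [Matrix.sum_apply]]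
    rw [haev, map_zero]
  calc p • (1 : Matrix (Fin n) (Fin n) ℂ[X])
      = ∑ d ∈ Finset.range (p.natDegree + 1),
          Polynomial.C (p.coeff d) • ((X ^ d : ℂ[X]) • 1)
        - ∑ d ∈ Finset.range (p.natDegree + 1),
          Polynomial.C (p.coeff d) • ((B ^ d).map Polynomial.C) := by rw [hA, hB, sub_zero]
    _ = ∑ d ∈ Finset.range (p.natDegree + 1),
          Polynomial.C (p.coeff d) • ((X ^ d : ℂ[X]) • 1 - (B ^ d).map Polynomial.C) := by
        rw [← Finset.sum_sub_distrib]
        apply Finset.sum_congr rfl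
        intro d _
        rw [smul_sub]

lemma adjugate_charmatrix_eq (B : Matrix (Fin n) (Fin n) ℂ) :
    ∃ (h : Polynomial ℂ) (Q : Matrix (Fin n) (Fin n) (Polynomial ℂ)),
      Matrix.charpoly B = minpoly ℂ B * h ∧ adjugate (charmatrix B) = h • Q := by
  obtain ⟨Q, hQ⟩ := exists_Q_of_aeval B (minpoly ℂ B) (minpoly.aeval ℂ B)
  obtain ⟨h, hh⟩ := Matrix.minpoly_dvd_charpoly B
  refine ⟨h, Q, hh, ?_⟩
  have hint : IsIntegral ℂ B := IsIntegral.of_finite ℂ B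
  have hμ0 : minpoly ℂ B ≠ 0 := minpoly.ne_zero hint
  have key : (minpoly ℂ B) • adjugate (charmatrix B) = (minpoly ℂ B) • (h • Q) := by
    calc (minpoly ℂ B) • adjugate (charmatrix B)
        = adjugate (charmatrix B) * ((minpoly ℂ B) • 1) := by
          rw [mul_smul_comm, mul_one]
      _ = adjugate (charmatrix B) * (charmatrix B * Q) := by rw [← hQ]
      _ = (adjugate (charmatrix B) * charmatrix B) * Q := (mul_assoc _ _ _).symm
      _ = ((charmatrix B).det • 1) * Q := by rw [adjugate_mul]
      _ = (Matrix.charpoly B) • Q := by rw [smul_mul_assoc, one_mul]; rfl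
      _ = (minpoly ℂ B * h) • Q := by rw [← hh]
      _ = (minpoly ℂ B) • (h • Q) := mul_smul _ _ _
  apply Matrix.ext; intro i j
  have hentry : minpoly ℂ B * adjugate (charmatrix B) i j = minpoly ℂ B * (h • Q) i j := by
    have := congrArg (fun A : Matrix (Fin n) (Fin n) (Polynomial ℂ) => A i j) key
    simpa [Matrix.smul_apply, smul_eq_mul] using this
  exact mul_left_cancel₀ hμ0 hentry

/-- Jacobi formula: linear coefficient of det(A + X N) -/
lemma coeff_one_det {F : Type*} [Field F] (A N : Matrix (Fin n) (Fin n) F)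
    (hA : IsUnit A.det) :
    (det (A.map Polynomial.C + (X : F[X]) • N.map Polynomial.C)).coeff 1
      = trace (adjugate A * N) := by
  have factor : A.map (Polynomial.C : F →+* F[X]) + (X : F[X]) • N.map Polynomial.C
      = A.map (Polynomial.C : F →+* F[X])
        * (1 + (X : F[X]) • (A⁻¹ * N).map Polynomial.C) := by
    rw [mul_add, mul_one, mul_smul_comm, ← Matrix.map_mul, ← mul_assoc,
      Matrix.mul_nonsing_inv _ hA, one_mul]
  rw [factor, det_mul]
  have hdet : det (A.map (Polynomial.C : F →+* F[X])) = Polynomial.C A.det := by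
    rw [← RingHom.mapMatrix_apply, ← RingHom.map_det]
  rw [hdet, Polynomial.coeff_C_mul, Matrix.coeff_det_one_add_X_smul_one]
  have hadj : adjugate A = A.det • A⁻¹ := by
    rw [Matrix.inv_def, smul_smul, Ring.mul_inverse_cancel _ hA, one_smul]
  rw [hadj, smul_mul_assoc, trace_smul, smul_eq_mul]

noncomputable def Wmat (B M : Matrix (Fin n) (Fin n) ℂ) :
    Matrix (Fin n) (Fin n) (Polynomial (Polynomial ℂ)) :=
  (charmatrix B).map Polynomial.C
    + (X : Polynomial (Polynomial ℂ)) • ((-(M.map Polynomial.C)).map Polynomial.C)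

lemma Wmat_eval (B M : Matrix (Fin n) (Fin n) ℂ) (c : ℂ) :
    (det (Wmat B M)).eval (Polynomial.C c) = Matrix.charpoly (B + c • M) := by
  have hmap : (Wmat B M).map (Polynomial.evalRingHom (Polynomial.C c))
      = charmatrix (B + c • M) := by
    apply Matrix.ext; intro i j
    simp only [Wmat, Matrix.map_apply, Matrix.add_apply, Matrix.smul_apply, smul_eq_mul,
      Matrix.neg_apply, Polynomial.coe_evalRingHom, Polynomial.eval_add, Polynomial.eval_mul,
      Polynomial.eval_X, Polynomial.eval_C]
    by_cases hij : i = j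
    · subst hij
      simp only [charmatrix_apply_eq, Matrix.add_apply, Matrix.smul_apply, smul_eq_mul,
        _root_.map_add, _root_.map_mul]
      ring
    · simp only [charmatrix_apply_ne _ _ _ hij, Matrix.add_apply, Matrix.smul_apply,
        smul_eq_mul, _root_.map_add, _root_.map_mul]
      ring
  have hdet := RingHom.map_det (Polynomial.evalRingHom (Polynomial.C c)) (Wmat B M)
  rw [RingHom.mapMatrix_apply, hmap] at hdet
  rw [Matrix.charpoly, ← hdet]
  rfl

lemma hasDerivAt_charpoly_coeff (B M : Matrix (Fin n) (Fin n) ℂ) (i : ℕ) :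
    HasDerivAt (fun c : ℂ => (Matrix.charpoly (B + c • M)).coeff i)
      ((((det (Wmat B M)).coeff 1).coeff i)) 0 := by
  set bigP := det (Wmat B M) with hbigP
  have hfun : ∀ c : ℂ, (Matrix.charpoly (B + c • M)).coeff i
      = ∑ d ∈ bigP.support, ((bigP.coeff d).coeff i) * c ^ d := by
    intro c
    rw [← Wmat_eval B M c, Polynomial.eval_eq_sum, Polynomial.sum, Polynomial.finset_sum_coeff]
    apply Finset.sum_congr rfl
    intro d _
    rw [← Polynomial.C_pow, Polynomial.coeff_mul_C]
  have hsum : HasDerivAt (fun c : ℂ => ∑ d ∈ bigP.support, ((bigP.coeff d).coeff i) * c ^ d)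
      (∑ d ∈ bigP.support, ((bigP.coeff d).coeff i) * (d * (0:ℂ) ^ (d - 1))) 0 :=
    HasDerivAt.fun_sum fun d _ => (hasDerivAt_pow d (0:ℂ)).const_mul _
  have hval : ∑ d ∈ bigP.support, ((bigP.coeff d).coeff i) * (d * (0:ℂ) ^ (d - 1))
      = (bigP.coeff 1).coeff i := by
    rw [Finset.sum_eq_single 1]
    · simp
    · intro d _ hd1
      rcases d with _ | d
      · simp
      · rcases d with _ | d
        · exact absurd rfl hd1
        · simp [zero_pow]
    · intro h1
      have h2 := Polynomial.notMem_support_iff.mp h1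
      simp [h2]
  have hfe : (fun c : ℂ => (Matrix.charpoly (B + c • M)).coeff i)
      = fun c : ℂ => ∑ d ∈ bigP.support, ((bigP.coeff d).coeff i) * c ^ d := funext hfun
  rw [hfe, ← hval]
  exact hsum

lemma differentiableAt_charpoly_coeff (B : Matrix (Fin n) (Fin n) ℂ) (i : ℕ) :
    DifferentiableAt ℂ (fun A : Matrix (Fin n) (Fin n) ℂ => (Matrix.charpoly A).coeff i) B := by
  classical
  let L : Matrix (Fin n) (Fin n) ℂ →ₗ[ℂ] (Fin n × Fin n → ℂ) :=
    { toFun := fun A p => A p.1 p.2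
      map_add' := fun _ _ => rfl
      map_smul' := fun _ _ => rfl }
  have h1 : AnalyticOnNhd ℂ
      (fun A : Matrix (Fin n) (Fin n) ℂ =>
        MvPolynomial.eval (L A) ((Matrix.charpoly.univ ℂ (Fin n)).coeff i)) Set.univ :=
    AnalyticOnNhd.eval_linearMap L _
  have h2 := (h1 B (Set.mem_univ B)).differentiableAt
  have hfe : (fun A : Matrix (Fin n) (Fin n) ℂ =>
      MvPolynomial.eval (L A) ((Matrix.charpoly.univ ℂ (Fin n)).coeff i))
      = fun A : Matrix (Fin n) (Fin n) ℂ => (Matrix.charpoly A).coeff i := by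
    funext A
    have := Matrix.charpoly.univ_coeff_eval₂Hom (Fin n) (RingHom.id ℂ)
      (fun p : Fin n × Fin n => A p.1 p.2) i
    rw [show Matrix.of (Function.curry (fun p : Fin n × Fin n => A p.1 p.2)) = A from rfl] at this
    exact this
  rw [hfe] at h2
  exact h2

lemma charpoly_coeff_stable (A : Matrix (Fin n) (Fin n) ℂ) {i : ℕ} (hni : n ≤ i) :
    (Matrix.charpoly A).coeff i = if i = n then 1 else 0 := by
  have hnd : (Matrix.charpoly A).natDegree = n := by
    simpa using Matrix.charpoly_natDegree_eq_dim A
  by_cases hin : i = n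
  · rw [if_pos hin, hin]
    have hmc := (Matrix.charpoly_monic A).coeff_natDegree
    rw [hnd] at hmc
    exact hmc
  · rw [if_neg hin]
    exact Polynomial.coeff_eq_zero_of_natDegree_lt (by omega)

lemma coeff_D1_high (B M : Matrix (Fin n) (Fin n) ℂ) {i : ℕ} (hni : n ≤ i) :
    ((det (Wmat B M)).coeff 1).coeff i = 0 := by
  have h := hasDerivAt_charpoly_coeff B M i
  have hfe : (fun c : ℂ => (Matrix.charpoly (B + c • M)).coeff i)
      = fun _ : ℂ => (if i = n then (1:ℂ) else 0) :=
    funext fun c => charpoly_coeff_stable _ hni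
  rw [hfe] at h
  exact h.unique (hasDerivAt_const 0 _)

lemma D1_factor (B M : Matrix (Fin n) (Fin n) ℂ) :
    ∃ (h g : Polynomial ℂ), Matrix.charpoly B = minpoly ℂ B * h ∧
      ((det (Wmat B M)).coeff 1) = h * g := by
  classical
  obtain ⟨h, Q, hh, hadj⟩ := adjugate_charmatrix_eq B
  set F := FractionRing (Polynomial ℂ)
  set ι : Polynomial ℂ →+* F := algebraMap (Polynomial ℂ) F with hι'
  have hιinj : Function.Injective ι := IsFractionRing.injective _ _
  set Φ : Polynomial (Polynomial ℂ) →+* Polynomial F := Polynomial.mapRingHom ι with hΦ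
  have hWmap : (Wmat B M).map Φ
      = ((charmatrix B).map ι).map Polynomial.C
        + (X : Polynomial F) • (((-(M.map Polynomial.C)).map ι).map Polynomial.C) := by
    apply Matrix.ext; intro i j
    simp only [Wmat, Matrix.map_apply, Matrix.add_apply, Matrix.smul_apply, smul_eq_mul, hΦ,
      Polynomial.coe_mapRingHom, Polynomial.map_add, Polynomial.map_mul, Polynomial.map_C,
      Polynomial.map_X]
  have hunit : IsUnit ((charmatrix B).map ι).det := by
    have hd : ((charmatrix B).map ι).det = ι (Matrix.charpoly B) := by
      rw [Matrix.charpoly, RingHom.map_det, RingHom.mapMatrix_apply]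
    rw [hd, isUnit_iff_ne_zero]
    intro h0
    exact (Matrix.charpoly_monic B).ne_zero (hιinj (by simpa using h0))
  have hjac := coeff_one_det ((charmatrix B).map ι) ((-(M.map Polynomial.C)).map ι) hunit
  have htracemap : ∀ A : Matrix (Fin n) (Fin n) (Polynomial ℂ),
      trace (A.map ι) = ι (trace A) := by
    intro A
    simp [Matrix.trace, Matrix.map_apply, map_sum, Matrix.diag]
  refine ⟨h, trace (Q * (-(M.map Polynomial.C))), hh, ?_⟩
  apply hιinj
  have step1 : ι ((det (Wmat B M)).coeff 1) = (det ((Wmat B M).map Φ)).coeff 1 := by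
    have hdet2 : ((Wmat B M).map ⇑Φ).det = Φ ((Wmat B M).det) := by
      rw [← RingHom.mapMatrix_apply, ← RingHom.map_det]
    rw [hdet2, hΦ]
    simp only [Polynomial.coe_mapRingHom, Polynomial.coeff_map]
  rw [step1, hWmap, hjac]
  have hadjmap : adjugate ((charmatrix B).map ι) = (adjugate (charmatrix B)).map ι := by
    have := RingHom.map_adjugate ι (charmatrix B)
    rw [RingHom.mapMatrix_apply, RingHom.mapMatrix_apply] at this
    exact this.symm
  rw [hadjmap, hadj]
  have hsmulmap : ((h • Q).map ι) = ι h • (Q.map ι) := by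
    apply Matrix.ext; intro i j
    simp [Matrix.map_apply, Matrix.smul_apply, smul_eq_mul]
  rw [hsmulmap, smul_mul_assoc, trace_smul, ← Matrix.map_mul, htracemap, smul_eq_mul,
    ← _root_.map_mul]

end VcurveAux

/-- For every eigenvalue λ of B, every 0 ≤ k ≤ m_λ − s_λ − 1 (with m_λ the algebraic
multiplicity of λ, s_λ its multiplicity as a root of the minimal polynomial of B) and
every M ∈ ℂ^{n×n}, one has v^{(k)}(λ) · (π'(B)M) = 0: the image of π'(B) is annihilated
by each of the linear functionals w ↦ v^{(k)}(λ)·w. -/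
theorem vcurve_dot_fderiv_symmPi_eq_zero
    (n : ℕ) (hn : 0 < n) (B : Matrix (Fin n) (Fin n) ℂ) (lam : ℂ)
    (hlam : lam ∈ spectrum ℂ B) (k : ℕ)
    (hk : k + (minpoly ℂ B).rootMultiplicity lam + 1
        ≤ (Matrix.charpoly B).rootMultiplicity lam)
    (M : Matrix (Fin n) (Fin n) ℂ) :
    ∑ j : Fin n, vcurve n k lam j * fderiv ℂ (symmPi n) B M j = 0 := by
  classical
  set D1 := (det (VcurveAux.Wmat B M)).coeff 1 with hD1def
  have hdiffc : ∀ i : ℕ,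
      DifferentiableAt ℂ (fun A : Matrix (Fin n) (Fin n) ℂ => (Matrix.charpoly A).coeff i) B :=
    VcurveAux.differentiableAt_charpoly_coeff B
  have hdcomp : ∀ j : Fin n,
      DifferentiableAt ℂ (fun A : Matrix (Fin n) (Fin n) ℂ => matSigma n ((j:ℕ)+1) A) B := by
    intro j
    exact (hdiffc (n - ((j:ℕ)+1))).const_mul ((-1:ℂ)^((j:ℕ)+1))
  have hfderiv_line : ∀ i : ℕ,
      fderiv ℂ (fun A : Matrix (Fin n) (Fin n) ℂ => (Matrix.charpoly A).coeff i) B M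
        = D1.coeff i := by
    intro i
    have hline : HasDerivAt (fun c : ℂ => B + c • M) M 0 := by
      have h1 : HasDerivAt (fun c : ℂ => c • M) ((1:ℂ) • M) 0 := (hasDerivAt_id 0).smul_const M
      rw [one_smul] at h1
      exact h1.const_add B
    have hfd : HasFDerivAt (fun A : Matrix (Fin n) (Fin n) ℂ => (Matrix.charpoly A).coeff i)
        (fderiv ℂ (fun A : Matrix (Fin n) (Fin n) ℂ => (Matrix.charpoly A).coeff i) B)
        (B + (0:ℂ) • M) := by
      rw [zero_smul, add_zero]
      exact (hdiffc i).hasFDerivAt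
    have hcomp := hfd.comp_hasDerivAt 0 hline
    exact hcomp.unique (VcurveAux.hasDerivAt_charpoly_coeff B M i)
  have hpi : fderiv ℂ (symmPi n) B = ContinuousLinearMap.pi
      (fun j : Fin n =>
        fderiv ℂ (fun A : Matrix (Fin n) (Fin n) ℂ => matSigma n ((j:ℕ)+1) A) B) :=
    fderiv_pi hdcomp
  have hcompval : ∀ j : Fin n, fderiv ℂ (symmPi n) B M j
      = (-1:ℂ)^((j:ℕ)+1) * D1.coeff (n - ((j:ℕ)+1)) := by
    intro j
    rw [hpi, ContinuousLinearMap.pi_apply]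
    have hms : (fun A : Matrix (Fin n) (Fin n) ℂ => matSigma n ((j:ℕ)+1) A)
        = fun A : Matrix (Fin n) (Fin n) ℂ =>
            ((-1:ℂ)^((j:ℕ)+1)) * ((Matrix.charpoly A).coeff (n - ((j:ℕ)+1))) := rfl
    rw [hms]
    erw [fderiv_const_mul (hdiffc (n - ((j:ℕ)+1))) ((-1:ℂ)^((j:ℕ)+1))]
    exact congrArg (fun x => (-1:ℂ)^((j:ℕ)+1) * x) (hfderiv_line _)
  have hvc : ∀ j : Fin n, vcurve n k lam j
      = (-1:ℂ)^((j:ℕ)+1)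
        * (Polynomial.derivative^[k] ((X:ℂ[X]) ^ (n - ((j:ℕ)+1)))).eval lam := by
    intro j
    have hfe : (fun s : ℂ => (-1:ℂ)^((j:ℕ)+1) * s ^ (n - ((j:ℕ)+1)))
        = fun s : ℂ =>
            (Polynomial.C ((-1:ℂ)^((j:ℕ)+1)) * (X:ℂ[X]) ^ (n - ((j:ℕ)+1))).eval s := by
      funext s; simp
    rw [vcurve, hfe, VcurveAux.iteratedDeriv_polyEval]
    simp only [Polynomial.iterate_derivative_C_mul, Polynomial.eval_mul, Polynomial.eval_C]
  have hsum1 : ∑ j : Fin n, vcurve n k lam j * fderiv ℂ (symmPi n) B M j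
      = ∑ j : Fin n, (Polynomial.derivative^[k] ((X:ℂ[X]) ^ (n - ((j:ℕ)+1)))).eval lam
          * D1.coeff (n - ((j:ℕ)+1)) := by
    apply Finset.sum_congr rfl
    intro j _
    rw [hvc j, hcompval j, mul_mul_mul_comm]
    have hsq : (-1:ℂ)^((j:ℕ)+1) * (-1:ℂ)^((j:ℕ)+1) = 1 := by
      rw [← pow_add]
      exact Even.neg_one_pow ⟨(j:ℕ)+1, rfl⟩
    rw [hsq, one_mul]
  rw [hsum1]
  have hre : ∑ j : Fin n, (Polynomial.derivative^[k] ((X:ℂ[X]) ^ (n - ((j:ℕ)+1)))).eval lam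
        * D1.coeff (n - ((j:ℕ)+1))
      = ∑ e ∈ Finset.range n,
          (Polynomial.derivative^[k] ((X:ℂ[X]) ^ e)).eval lam * D1.coeff e := by
    rw [Fin.sum_univ_eq_sum_range
      (fun j => (Polynomial.derivative^[k] ((X:ℂ[X]) ^ (n - (j+1)))).eval lam
        * D1.coeff (n - (j+1))) n]
    rw [← Finset.sum_range_reflect
      (fun e => (Polynomial.derivative^[k] ((X:ℂ[X]) ^ e)).eval lam * D1.coeff e) n]
    apply Finset.sum_congr rfl
    intro j _
    have hidx : n - 1 - j = n - (j + 1) := by omega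
    rw [hidx]
  rw [hre]
  have hhigh : ∀ e, n ≤ e → D1.coeff e = 0 := fun e he => VcurveAux.coeff_D1_high B M he
  rw [VcurveAux.sum_coeff_eval D1 hhigh]
  obtain ⟨h, g, hh, hfac⟩ := VcurveAux.D1_factor B M
  apply VcurveAux.eval_iterate_derivative_eq_zero (a := lam)
  have hchar0 : Matrix.charpoly B ≠ 0 := (Matrix.charpoly_monic B).ne_zero
  have hmul0 : minpoly ℂ B * h ≠ 0 := hh ▸ hchar0
  have hrm := Polynomial.rootMultiplicity_mul (x := lam) hmul0
  have hk' : k + 1 ≤ h.rootMultiplicity lam := by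
    rw [hh, hrm] at hk
    omega
  have hdvd1 : (X - Polynomial.C lam)^(k+1) ∣ h :=
    dvd_trans (pow_dvd_pow _ hk') (Polynomial.pow_rootMultiplicity_dvd h lam)
  rw [← hD1def] at hfac
  rw [hfac]
  exact Dvd.dvd.mul_right hdvd1 g
end

section
/- Let n be a positive integer and define v : ℂ → ℂ^n by v(t)_j = (−1)^j t^{n−j} for 1 ≤ j ≤ n, with v^{(k)} its k-th componentwise derivative. Let λ_1, …, λ_p ∈ ℂ be pairwise distinct and let r_1, …, r_p be positive integers with r_1 + ⋯ + r_p ≤ n. Then the family of vectors { v^{(k)}(λ_i) : 1 ≤ i ≤ p, 0 ≤ k ≤ r_i − 1 } is linearly independent in ℂ^n. -/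
open Matrix Polynomial

private lemma iteratedDeriv_polyEval (P : ℂ[X]) (k : ℕ) :
    iteratedDeriv k (fun s => P.eval s) = fun t => ((derivative^[k] P)).eval t := by
  induction k with
  | zero => simp
  | succ k ih =>
    rw [iteratedDeriv_succ, ih]
    funext t
    rw [Function.iterate_succ_apply']
    exact Polynomial.deriv _

private lemma eval_iterate_derivative_eq (Q : ℂ[X]) (a : ℂ) (k : ℕ) :
    (derivative^[k] Q).eval a = (k.factorial : ℂ) * (taylor a Q).coeff k := by
  rw [← Polynomial.factorial_smul_hasseDeriv (R := ℂ) k]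
  simp only [LinearMap.smul_apply, Polynomial.eval_smul, taylor_coeff]
  simp [nsmul_eq_mul]

private lemma taylor_pow (a : ℂ) (q : ℂ[X]) (m : ℕ) :
    taylor a (q ^ m) = (taylor a q) ^ m := by
  simp [taylor_apply, pow_comp]

private lemma taylor_X_sub_C (a : ℂ) : taylor a (X - C a) = X := by
  rw [map_sub, taylor_X, taylor_C]; ring

private lemma eval_iterate_derivative_zero (Q : ℂ[X]) (a : ℂ) (m k : ℕ)
    (hdvd : (X - C a) ^ m ∣ Q) (hk : k < m) :
    (derivative^[k] Q).eval a = 0 := by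
  obtain ⟨S, rfl⟩ := hdvd
  rw [eval_iterate_derivative_eq, taylor_mul, taylor_pow, taylor_X_sub_C]
  rw [mul_comm ((X : ℂ[X]) ^ m), coeff_mul_X_pow']
  simp [Nat.not_le.mpr hk]

private lemma eval_iterate_derivative_key (S : ℂ[X]) (a : ℂ) (k : ℕ) :
    (derivative^[k] ((X - C a) ^ k * S)).eval a = (k.factorial : ℂ) * S.eval a := by
  rw [eval_iterate_derivative_eq, taylor_mul, taylor_pow, taylor_X_sub_C]
  rw [mul_comm ((X : ℂ[X]) ^ k), coeff_mul_X_pow']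
  simp [taylor_coeff_zero]

/-- If λ_1, …, λ_p ∈ ℂ are pairwise distinct and r_1, …, r_p are positive integers with
r_1 + ⋯ + r_p ≤ n, then the family { v^{(k)}(λ_i) : 1 ≤ i ≤ p, 0 ≤ k ≤ r_i − 1 } is
linearly independent in ℂ^n. -/
theorem linearIndependent_vcurve
    (n : ℕ) (hn : 0 < n) (p : ℕ) (lam : Fin p → ℂ) (hinj : Function.Injective lam)
    (r : Fin p → ℕ) (hr : ∀ i, 0 < r i) (hsum : ∑ i, r i ≤ n) :
    LinearIndependent ℂ
      (fun ik : Σ i : Fin p, Fin (r i) => vcurve n (ik.2 : ℕ) (lam ik.1)) := by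
  rw [Fintype.linearIndependent_iff]
  intro g hg
  -- the linear functional L(P) = ∑ g ik * (d^k P)(λ_i)
  set M : ℂ[X] →ₗ[ℂ] ℂ :=
    ∑ ik : Σ i : Fin p, Fin (r i), g ik •
      ((Polynomial.leval (lam ik.1)).comp
        ((Polynomial.derivative : ℂ[X] →ₗ[ℂ] ℂ[X]) ^ (ik.2 : ℕ))) with hM
  have hMapp : ∀ P : ℂ[X],
      M P = ∑ ik : Σ i : Fin p, Fin (r i),
        g ik * (derivative^[(ik.2 : ℕ)] P).eval (lam ik.1) := by
    intro P
    simp [hM, LinearMap.sum_apply, Module.End.pow_apply, leval, smul_eq_mul]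
  -- M vanishes on monomials X^m for m < n
  have hmono : ∀ m, m < n → M (X ^ m) = 0 := by
    intro m hm
    set j : Fin n := ⟨n - 1 - m, by omega⟩ with hj
    have hgj := congrFun hg j
    have hjm : n - ((j : ℕ) + 1) = m := by simp [hj]; omega
    have hvc : ∀ (k : ℕ) (t : ℂ), vcurve n k t j
        = (-1 : ℂ) ^ ((j : ℕ) + 1) * (derivative^[k] ((X : ℂ[X]) ^ m)).eval t := by
      intro k t
      have hfun : (fun s : ℂ => (-1 : ℂ) ^ ((j : ℕ) + 1) * s ^ (n - ((j : ℕ) + 1)))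
          = fun s => (C ((-1 : ℂ) ^ ((j : ℕ) + 1)) * X ^ m : ℂ[X]).eval s := by
        funext s; simp [hjm]
      rw [vcurve, hfun, iteratedDeriv_polyEval, iterate_derivative_C_mul]
      simp
    simp only [Finset.sum_apply, Pi.smul_apply, Pi.zero_apply, smul_eq_mul] at hgj
    simp only [hvc] at hgj
    have : (-1 : ℂ) ^ ((j : ℕ) + 1) *
        (∑ ik : Σ i : Fin p, Fin (r i),
          g ik * (derivative^[(ik.2 : ℕ)] ((X : ℂ[X]) ^ m)).eval (lam ik.1)) = 0 := by
      rw [Finset.mul_sum, ← hgj]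
      congr 1; funext ik; ring
    rw [hMapp]
    rcases mul_eq_zero.mp this with h | h
    · exact absurd h (by simp [pow_ne_zero])
    · exact h
  -- M vanishes on polynomials of degree < n
  have hdeg : ∀ P : ℂ[X], P.natDegree < n → M P = 0 := by
    intro P hP
    conv_lhs => rw [P.as_sum_range' n hP]
    rw [map_sum]
    refine Finset.sum_eq_zero fun m hm => ?_
    rw [← C_mul_X_pow_eq_monomial, ← smul_eq_C_mul, LinearMap.map_smul,
      hmono m (Finset.mem_range.mp hm), smul_zero]
  -- main argument: downward induction on k within each block i₀
  rintro ⟨i₀, k₀⟩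
  suffices H : ∀ j : ℕ, ∀ k : Fin (r i₀), r i₀ = (k : ℕ) + 1 + j → g ⟨i₀, k⟩ = 0 by
    exact H (r i₀ - 1 - (k₀ : ℕ)) k₀ (by omega)
  intro j
  induction j using Nat.strong_induction_on with
  | _ j IH =>
    intro k hk
    set a := lam i₀ with ha
    set Q : ℂ[X] := (X - C a) ^ (k : ℕ) * ∏ i ∈ Finset.univ.erase i₀, (X - C (lam i)) ^ (r i)
      with hQ
    have hsum' : ∑ i ∈ Finset.univ.erase i₀, r i + r i₀ = ∑ i, r i :=
      Finset.sum_erase_add _ _ (Finset.mem_univ i₀)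
    have hQdeg : Q.natDegree < n := by
      have h1 : ∀ (b : ℂ) (e : ℕ), ((X - C b) ^ e : ℂ[X]).natDegree = e := by
        intro b e; rw [natDegree_pow, natDegree_X_sub_C, mul_one]
      have h2 : (∏ i ∈ Finset.univ.erase i₀, ((X - C (lam i)) ^ (r i) : ℂ[X])).natDegree
          = ∑ i ∈ Finset.univ.erase i₀, r i := by
        rw [natDegree_prod _ _ (fun i _ => pow_ne_zero _ (X_sub_C_ne_zero _))]
        exact Finset.sum_congr rfl fun i _ => h1 _ _
      rw [hQ, natDegree_mul (pow_ne_zero _ (X_sub_C_ne_zero _))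
        (Finset.prod_ne_zero_iff.mpr fun i _ => pow_ne_zero _ (X_sub_C_ne_zero _)),
        h1, h2]
      omega
    have hMQ : M Q = 0 := hdeg Q hQdeg
    rw [hMapp] at hMQ
    rw [Finset.sum_eq_single (⟨i₀, k⟩ : Σ i : Fin p, Fin (r i))] at hMQ
    · -- the remaining term
      have hval : (derivative^[(k : ℕ)] Q).eval a
          = ((k : ℕ).factorial : ℂ) *
            (∏ i ∈ Finset.univ.erase i₀, ((X - C (lam i)) ^ (r i) : ℂ[X])).eval a := by
        rw [hQ]; exact eval_iterate_derivative_key _ _ _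
      have hE : (∏ i ∈ Finset.univ.erase i₀, ((X - C (lam i)) ^ (r i) : ℂ[X])).eval a ≠ 0 := by
        rw [eval_prod]
        refine Finset.prod_ne_zero_iff.mpr fun i hi => ?_
        simp only [eval_pow, eval_sub, eval_X, eval_C]
        exact pow_ne_zero _ (sub_ne_zero.mpr fun h => (Finset.mem_erase.mp hi).1
          (hinj (by rw [← ha, h])))
      rw [hval] at hMQ
      rcases mul_eq_zero.mp hMQ with h | h
      · exact h
      · exact absurd h (mul_ne_zero (Nat.cast_ne_zero.mpr (Nat.factorial_ne_zero _)) hE)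
    · rintro ⟨i, k'⟩ - hne
      by_cases hi : i = i₀
      · subst hi
        have hk' : (k' : ℕ) ≠ (k : ℕ) := by
          intro h
          exact hne (by simp [Fin.ext_iff, h])
        rcases lt_or_gt_of_ne hk' with hlt | hgt
        · rw [eval_iterate_derivative_zero Q (lam i) (k : ℕ) _ (dvd_mul_right _ _) hlt,
            mul_zero]
        · have : g ⟨i, k'⟩ = 0 := by
            refine IH (r i - 1 - (k' : ℕ)) (by omega) k' (by omega)
          rw [this, zero_mul]
      · have hdvd : ((X - C (lam i)) ^ (r i) : ℂ[X]) ∣ Q := by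
          rw [hQ]
          exact Dvd.dvd.mul_left
            (Finset.dvd_prod_of_mem _ (Finset.mem_erase.mpr ⟨hi, Finset.mem_univ i⟩)) _
        rw [eval_iterate_derivative_zero Q (lam i) (r i) _ hdvd k'.isLt, mul_zero]
    · intro h
      exact absurd (Finset.mem_univ _) h
end

section
/- Let n be a positive integer and let π : ℂ^{n×n} → ℂ^n be the symmetrization map π(M) = (σ_1(M), …, σ_n(M)). If B ∈ ℂ^{n×n} is non-derogatory, i.e., the minimal polynomial of B has degree n (equivalently, the minimal polynomial equals the characteristic polynomial), then the derivative π'(B) : ℂ^{n×n} → ℂ^n is surjective; that is, non-derogatory (cyclic) matrices are regular points of π. -/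
open Matrix Polynomial

attribute [local instance] Matrix.normedAddCommGroup Matrix.normedSpace

section Aux

variable {n : ℕ}

/-- coefficient matrices of the adjugate of the characteristic matrix -/
noncomputable def Dmat {n : ℕ} (B : Matrix (Fin n) (Fin n) ℂ) (k : ℕ) :
    Matrix (Fin n) (Fin n) ℂ :=
  Matrix.of fun p q => ((adjugate (charmatrix B)) p q).coeff k


lemma diff_entry (a b : Fin n) :
    Differentiable ℂ (fun M : Matrix (Fin n) (Fin n) ℂ => M a b) := by
  change Differentiable ℂ ((fun v : Fin n → ℂ => v b) ∘ (fun M : (Fin n) → (Fin n) → ℂ => M a))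
  exact (differentiable_apply b).comp (differentiable_apply a)

lemma diff_charmatrix_coeff (a b : Fin n) (k : ℕ) :
    Differentiable ℂ (fun M : Matrix (Fin n) (Fin n) ℂ => (charmatrix M a b).coeff k) := by
  by_cases hab : a = b
  · subst hab
    simp only [charmatrix_apply_eq, coeff_sub, coeff_X, coeff_C]
    apply Differentiable.sub (differentiable_const _)
    by_cases hk : k = 0 <;> simp [hk, diff_entry a a, differentiable_const] <;> exact diff_entry a a
  · simp only [charmatrix_apply_ne _ _ _ hab, coeff_neg, coeff_C]
    apply Differentiable.neg
    by_cases hk : k = 0 <;> simp [hk, diff_entry a b, differentiable_const] <;> exact diff_entry a b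

lemma diff_prod_coeff (g : Fin n → Matrix (Fin n) (Fin n) ℂ → ℂ[X])
    (hg : ∀ i k, Differentiable ℂ (fun M => (g i M).coeff k)) :
    ∀ k, Differentiable ℂ (fun M => (∏ i, g i M).coeff k) := by
  have h := Finset.prod_induction (s := (Finset.univ : Finset (Fin n))) (f := g)
    (fun q => ∀ k, Differentiable ℂ (fun M => (q M).coeff k))
    (fun p q hp hq k => by
      have : (fun M => ((p * q) M).coeff k)
          = fun M => ∑ x ∈ Finset.HasAntidiagonal.antidiagonal k, (p M).coeff x.1 * (q M).coeff x.2 := by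
        funext M; simp [Pi.mul_apply, Polynomial.coeff_mul]
      rw [this]
      exact Differentiable.fun_sum fun x _ => (hp x.1).mul (hq x.2))
    (fun k => by simpa [Pi.one_apply] using (differentiable_const ((1:ℂ[X]).coeff k)))
    (fun i _ => hg i)
  intro k
  have := h k
  simpa [Finset.prod_apply] using this

lemma diff_charpoly_coeff (k : ℕ) :
    Differentiable ℂ (fun M : Matrix (Fin n) (Fin n) ℂ => (Matrix.charpoly M).coeff k) := by
  have : (fun M : Matrix (Fin n) (Fin n) ℂ => (Matrix.charpoly M).coeff k)
      = fun M => ∑ σ : Equiv.Perm (Fin n),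
          ((Equiv.Perm.sign σ : ℤ) : ℂ) * (∏ i, charmatrix M (σ i) i).coeff k := by
    funext M
    rw [Matrix.charpoly, Matrix.det_apply, Polynomial.finset_sum_coeff]
    refine Finset.sum_congr rfl fun σ _ => ?_
    rw [Units.smul_def, zsmul_eq_mul, Polynomial.coeff_intCast_mul]
  rw [this]
  exact Differentiable.fun_sum fun σ _ =>
    ((diff_prod_coeff _ (fun i k => diff_charmatrix_coeff (σ i) i k) k).const_mul _)


-- expansion of charpoly along a line
lemma charmatrix_line (B H : Matrix (Fin n) (Fin n) ℂ) (s : ℂ) :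
    charmatrix (B + s • H)
      = Matrix.of ((fun i => (-(C s)) • (H.map (C : ℂ →+* ℂ[X])) i) + (fun i => charmatrix B i)) := by
  ext i j
  by_cases hij : i = j <;>
    simp [hij, charmatrix_apply_eq, charmatrix_apply_ne, Matrix.map_apply, C_mul, Pi.add_apply] <;>
    ring

lemma charpoly_line_coeff (B H : Matrix (Fin n) (Fin n) ℂ) (k : ℕ) (s : ℂ) :
    (Matrix.charpoly (B + s • H)).coeff k
      = ∑ S : Finset (Fin n), (-s) ^ S.card *
          ((Matrix.of (S.piecewise (fun i => (H.map (C : ℂ →+* ℂ[X])) i)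
              (fun i => charmatrix B i))).det).coeff k := by
  classical
  set N : Fin n → Fin n → ℂ[X] := fun i => (H.map (C : ℂ →+* ℂ[X])) i with hN
  set A : Fin n → Fin n → ℂ[X] := fun i => charmatrix B i with hA
  have h1 : (Matrix.charpoly (B + s • H))
      = Matrix.detRowAlternating ((fun i => (-(C s)) • N i) + A) := by
    rw [Matrix.charpoly, charmatrix_line]; rfl
  have h1' : Matrix.detRowAlternating ((fun i => (-(C s)) • N i) + A)
      = (Matrix.detRowAlternating (R := ℂ[X]) (n := Fin n)).toMultilinearMap
          ((fun i => (-(C s)) • N i) + A) := rfl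
  rw [h1, h1', MultilinearMap.map_add_univ]
  rw [Polynomial.finset_sum_coeff]
  refine Finset.sum_congr rfl fun S _ => ?_
  have h2 : S.piecewise (fun i => (-(C s)) • N i) A
      = S.piecewise (fun i => (fun l => if l ∈ S then -(C s) else 1) i • (S.piecewise N A) i)
          (S.piecewise N A) := by
    funext i
    by_cases hi : i ∈ S <;> simp [Finset.piecewise, hi]
  rw [h2, MultilinearMap.map_piecewise_smul]
  have h4 : (∏ i ∈ S, if i ∈ S then -(C s) else (1:ℂ[X])) = (-(C s)) ^ S.card := by
    rw [Finset.prod_congr rfl (fun i hi => if_pos hi), Finset.prod_const]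
  rw [h4]
  have h3 : (-(C s) : ℂ[X]) ^ S.card = C ((-s) ^ S.card) := by
    rw [← map_neg, ← map_pow]
  rw [smul_eq_mul, h3, Polynomial.coeff_C_mul]
  rfl

lemma det_singleton (B H : Matrix (Fin n) (Fin n) ℂ) (i : Fin n) (k : ℕ) :
    ((Matrix.of (({i} : Finset (Fin n)).piecewise (fun i => (H.map (C : ℂ →+* ℂ[X])) i)
        (fun i => charmatrix B i))).det).coeff k
      = ∑ j, H i j * ((adjugate (charmatrix B)) j i).coeff k := by
  classical
  set A := charmatrix B with hA
  have h1 : Matrix.of (({i} : Finset (Fin n)).piecewise (fun i => (H.map (C : ℂ →+* ℂ[X])) i)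
      (fun i => A i)) = A.updateRow i ((H.map (C : ℂ →+* ℂ[X])) i) := by
    rw [Finset.piecewise_singleton]; rfl
  rw [h1]
  have h2 : (H.map (C : ℂ →+* ℂ[X])) i
      = ∑ j, H i j • (Pi.single j (1 : ℂ[X]) : Fin n → ℂ[X]) := by
    funext j'
    simp [Matrix.map_apply, Pi.single_apply, Finset.sum_ite_eq, Algebra.smul_def]
  rw [h2]
  set φ : (Fin n → ℂ[X]) →ₗ[ℂ[X]] ℂ[X] :=
    (Matrix.detRowAlternating (R := ℂ[X]) (n := Fin n)).toMultilinearMap.toLinearMap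
      (fun l => A l) i with hφ
  have hφ' : ∀ v : Fin n → ℂ[X], (A.updateRow i v).det = φ v := fun v => rfl
  rw [hφ', map_sum]
  rw [Polynomial.finset_sum_coeff]
  refine Finset.sum_congr rfl fun j _ => ?_
  rw [LinearMap.map_smul_of_tower, ← hφ' _, ← Matrix.adjugate_apply, Polynomial.coeff_smul]
  rfl




lemma hasDerivAt_charpoly_coeff (B H : Matrix (Fin n) (Fin n) ℂ) (k : ℕ) :
    HasDerivAt (fun s : ℂ => (Matrix.charpoly (B + s • H)).coeff k)
      (-∑ i, ∑ j, H i j * ((adjugate (charmatrix B)) j i).coeff k) 0 := by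
  classical
  set d : Finset (Fin n) → ℂ := fun S =>
    ((Matrix.of (S.piecewise (fun i => (H.map (C : ℂ →+* ℂ[X])) i)
        (fun i => charmatrix B i))).det).coeff k with hd
  have hfun : (fun s : ℂ => (Matrix.charpoly (B + s • H)).coeff k)
      = fun s => ∑ S : Finset (Fin n), (-s) ^ S.card * d S := by
    funext s; exact charpoly_line_coeff B H k s
  rw [hfun]
  have h : HasDerivAt (fun s : ℂ => ∑ S : Finset (Fin n), (-s) ^ S.card * d S)
      (∑ S : Finset (Fin n), ((S.card : ℂ) * (-0:ℂ) ^ (S.card - 1) * (-1)) * d S) 0 := by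
    apply HasDerivAt.fun_sum
    intro S _
    have h1 : HasDerivAt (fun s : ℂ => (-s) ^ S.card)
        ((S.card : ℂ) * (-0:ℂ) ^ (S.card - 1) * (-1)) 0 := by
      have := (hasDerivAt_pow S.card ((-0 : ℂ))).comp 0 ((hasDerivAt_id (0:ℂ)).neg)
      exact ((hasDerivAt_neg (0:ℂ)).pow S.card)
    simpa [mul_comm] using h1.mul_const (d S)
  convert h using 1
  have h2 : ∀ S : Finset (Fin n), ((S.card : ℂ) * (-0:ℂ) ^ (S.card - 1) * (-1)) * d S
      = if S.card = 1 then -d S else 0 := by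
    intro S
    rcases hc : S.card with _ | m
    · simp
    · rcases m with _ | m'
      · simp
      · simp [pow_succ]
  rw [Finset.sum_congr rfl (fun S _ => h2 S), ← Finset.sum_filter]
  have himg : (Finset.univ.filter (fun S : Finset (Fin n) => S.card = 1))
      = Finset.univ.image (fun i : Fin n => ({i} : Finset (Fin n))) := by
    ext S
    simp only [Finset.mem_filter, Finset.mem_univ, true_and, Finset.mem_image,
      Finset.card_eq_one]
    constructor
    · rintro ⟨a, rfl⟩; exact ⟨a, rfl⟩
    · rintro ⟨a, rfl⟩; exact ⟨a, rfl⟩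
  rw [himg, Finset.sum_image (fun a _ b _ h => Finset.singleton_injective h)]
  rw [← Finset.sum_neg_distrib]
  exact Finset.sum_congr rfl fun i _ => by
    simp only [hd]
    rw [det_singleton B H i k]

lemma fderiv_charpoly_coeff_apply (B H : Matrix (Fin n) (Fin n) ℂ) (k : ℕ) :
    fderiv ℂ (fun M : Matrix (Fin n) (Fin n) ℂ => (Matrix.charpoly M).coeff k) B H
      = -∑ i, ∑ j, H i j * ((adjugate (charmatrix B)) j i).coeff k := by
  have hdiff : DifferentiableAt ℂ
      (fun M : Matrix (Fin n) (Fin n) ℂ => (Matrix.charpoly M).coeff k) B :=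
    (diff_charpoly_coeff k) B
  have hline : HasDerivAt (fun s : ℂ => B + s • H) H 0 := by
    have := (((hasDerivAt_id (0:ℂ)).smul_const H).const_add B); rw [one_smul] at this; exact this
  have h0 : B + (0:ℂ) • H = B := by simp
  have hF : HasFDerivAt (fun M : Matrix (Fin n) (Fin n) ℂ => (Matrix.charpoly M).coeff k)
      (fderiv ℂ (fun M : Matrix (Fin n) (Fin n) ℂ => (Matrix.charpoly M).coeff k) B)
      (B + (0:ℂ) • H) := h0.symm ▸ hdiff.hasFDerivAt
  have hcomp := hF.comp_hasDerivAt 0 hline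
  exact ((hasDerivAt_charpoly_coeff B H k).unique hcomp).symm



lemma charmatrix_entry (B : Matrix (Fin n) (Fin n) ℂ) (l q : Fin n) :
    charmatrix B l q = (if l = q then (X : ℂ[X]) else 0) - C (B l q) := by
  by_cases h : l = q <;> simp [h, charmatrix_apply_eq, charmatrix_apply_ne]

lemma Dmat_rec (B : Matrix (Fin n) (Fin n) ℂ) (m : ℕ) :
    Dmat B m - Dmat B (m + 1) * B = ((Matrix.charpoly B).coeff (m + 1)) • 1 := by
  classical
  have h := Matrix.adjugate_mul (charmatrix B)
  ext p q
  have he : (adjugate (charmatrix B) * charmatrix B) p q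
      = ((charmatrix B).det • (1 : Matrix (Fin n) (Fin n) ℂ[X])) p q := by rw [h]
  rw [Matrix.mul_apply] at he
  have he2 : ∀ l, adjugate (charmatrix B) p l * charmatrix B l q
      = (if l = q then adjugate (charmatrix B) p l * X else 0)
        - adjugate (charmatrix B) p l * C (B l q) := by
    intro l
    rw [charmatrix_entry, mul_sub, mul_ite, mul_zero]
  rw [Finset.sum_congr rfl fun l _ => he2 l, Finset.sum_sub_distrib] at he
  have hc := congrArg (fun p : ℂ[X] => p.coeff (m + 1)) he
  simp only [coeff_sub, Polynomial.finset_sum_coeff] at hc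
  have h1 : ∀ l, ((if l = q then adjugate (charmatrix B) p l * X else 0) : ℂ[X]).coeff (m+1)
      = if l = q then (adjugate (charmatrix B) p l).coeff m else 0 := by
    intro l
    by_cases hl : l = q <;> simp [hl, coeff_mul_X]
  have h2 : ∀ l, ((adjugate (charmatrix B) p l * C (B l q)) : ℂ[X]).coeff (m+1)
      = (adjugate (charmatrix B) p l).coeff (m+1) * B l q := by
    intro l; rw [coeff_mul_C]
  rw [Finset.sum_congr rfl fun l _ => h1 l, Finset.sum_congr rfl fun l _ => h2 l,
    Finset.sum_ite_eq' Finset.univ q (fun l => (adjugate (charmatrix B) p l).coeff m)] at hc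
  simp only [Finset.mem_univ, if_true] at hc
  simp only [Matrix.sub_apply, Matrix.mul_apply, Matrix.smul_apply, Matrix.one_apply,
    smul_eq_mul, Dmat, Matrix.of_apply]
  rw [hc]
  simp only [Matrix.charpoly, Matrix.smul_apply, Matrix.one_apply, smul_eq_mul]
  by_cases hpq : p = q <;> simp [hpq]

lemma Dmat_vanish_big (B : Matrix (Fin n) (Fin n) ℂ) :
    ∃ K : ℕ, ∀ m, K ≤ m → Dmat B m = 0 := by
  refine ⟨(∑ p : Fin n, ∑ q : Fin n, ((adjugate (charmatrix B)) p q).natDegree) + 1,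
    fun m hm => ?_⟩
  ext p q
  have hle : ((adjugate (charmatrix B)) p q).natDegree < m := by
    have h1 : ((adjugate (charmatrix B)) p q).natDegree
        ≤ ∑ q : Fin n, ((adjugate (charmatrix B)) p q).natDegree :=
      Finset.single_le_sum (f := fun q => ((adjugate (charmatrix B)) p q).natDegree)
        (fun _ _ => Nat.zero_le _) (Finset.mem_univ q)
    have h2 : (∑ q : Fin n, ((adjugate (charmatrix B)) p q).natDegree)
        ≤ ∑ p : Fin n, ∑ q : Fin n, ((adjugate (charmatrix B)) p q).natDegree :=
      Finset.single_le_sum (f := fun p => ∑ q : Fin n,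
        ((adjugate (charmatrix B)) p q).natDegree) (fun _ _ => Nat.zero_le _)
        (Finset.mem_univ p)
    omega
  simpa [Dmat] using Polynomial.coeff_eq_zero_of_natDegree_lt hle

lemma Dmat_vanish (B : Matrix (Fin n) (Fin n) ℂ) (m : ℕ) (hm : n ≤ m) : Dmat B m = 0 := by
  obtain ⟨K, hK⟩ := Dmat_vanish_big B
  have key : ∀ t : ℕ, ∀ m, n ≤ m → Dmat B m = Dmat B (m + t) * B ^ t := by
    intro t
    induction t with
    | zero => intro m _; simp
    | succ t ih =>
      intro m hm
      have h1 := ih m hm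
      have h2 := Dmat_rec B (m + t)
      have hc : (Matrix.charpoly B).coeff (m + t + 1) = 0 := by
        apply Polynomial.coeff_eq_zero_of_natDegree_lt
        rw [Matrix.charpoly_natDegree_eq_dim]
        simp only [Fintype.card_fin]
        omega
      rw [hc, zero_smul, sub_eq_zero] at h2
      rw [h1, h2]
      rw [Matrix.mul_assoc, ← pow_succ']
      ring_nf
  rcases le_or_gt K (m) with h | h
  · exact hK m h
  · have := key (K - m) m hm
    rw [this, hK (m + (K - m)) (by omega), Matrix.zero_mul]

lemma Dmat_top (hn : 0 < n) (B : Matrix (Fin n) (Fin n) ℂ) : Dmat B (n - 1) = 1 := by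
  have h := Dmat_rec B (n - 1)
  have hn1 : n - 1 + 1 = n := by omega
  rw [hn1] at h
  have hcn : (Matrix.charpoly B).coeff n = 1 := by
    have hmonic := Matrix.charpoly_monic B
    have hdeg : (Matrix.charpoly B).natDegree = n := by
      rw [Matrix.charpoly_natDegree_eq_dim]; simp
    have h2 := hmonic.coeff_natDegree; rwa [hdeg] at h2
  rw [hcn, one_smul, Dmat_vanish B n le_rfl, Matrix.zero_mul, sub_zero] at h
  exact h

lemma Dmat_struct (hn : 0 < n) (B : Matrix (Fin n) (Fin n) ℂ) :
    ∀ t : ℕ, t < n → ∃ a : ℕ → ℂ,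
      Dmat B (n - 1 - t) = B ^ t + ∑ s ∈ Finset.range t, a s • B ^ s := by
  intro t
  induction t with
  | zero => intro _; exact ⟨0, by simp [Dmat_top hn B]⟩
  | succ t ih =>
    intro ht
    obtain ⟨a, ha⟩ := ih (by omega)
    have hrec := Dmat_rec B (n - 1 - (t + 1))
    have he : n - 1 - (t + 1) + 1 = n - 1 - t := by omega
    rw [he] at hrec
    set c := (Matrix.charpoly B).coeff (n - 1 - t) with hc
    rw [sub_eq_iff_eq_add] at hrec
    refine ⟨fun s => if s = 0 then c else a (s - 1), ?_⟩
    rw [hrec, ha]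
    rw [Finset.sum_range_succ' (fun s => (if s = 0 then c else a (s - 1)) • B ^ s) t]
    simp only [if_pos rfl, Nat.add_sub_cancel, if_neg (Nat.succ_ne_zero _)]
    rw [add_mul, Finset.sum_mul]
    have h1 : B ^ t * B = B ^ (t + 1) := (pow_succ B t).symm
    have h2 : ∀ s, (a s • B ^ s) * B = a s • B ^ (s + 1) := by
      intro s; rw [Matrix.smul_mul, ← pow_succ]
    rw [h1, Finset.sum_congr rfl fun s _ => h2 s]
    simp only [pow_zero, if_true]
    abel
lemma pow_linearIndependent {n : ℕ} (hn : 0 < n) (B : Matrix (Fin n) (Fin n) ℂ)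
    (hB : (minpoly ℂ B).natDegree = n) (g : Fin n → ℂ)
    (hg : ∑ i : Fin n, g i • B ^ (i : ℕ) = 0) : ∀ i, g i = 0 := by
  classical
  set p : ℂ[X] := ∑ i : Fin n, C (g i) * X ^ (i : ℕ) with hp
  have haeval : aeval B p = 0 := by
    rw [hp, map_sum]
    rw [← hg]
    refine Finset.sum_congr rfl fun i _ => ?_
    rw [_root_.map_mul, aeval_C, _root_.map_pow, aeval_X, Algebra.smul_def]
  have hp0 : p = 0 := by
    by_contra hne
    have hdeg := minpoly.degree_le_of_ne_zero ℂ B hne haeval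
    have hdp : p.degree ≤ ((n - 1 : ℕ) : WithBot ℕ) := by
      refine le_trans (Polynomial.degree_sum_le _ _) ?_
      refine Finset.sup_le fun i _ => ?_
      refine le_trans (Polynomial.degree_C_mul_X_pow_le _ _) ?_
      exact_mod_cast Nat.cast_le.mpr (by omega : (i : ℕ) ≤ n - 1)
    have hmp : (minpoly ℂ B).degree = (n : WithBot ℕ) := by
      have hne0 : minpoly ℂ B ≠ 0 := by
        intro h; rw [h] at hB; simp at hB; omega
      rw [Polynomial.degree_eq_natDegree hne0, hB]
    rw [hmp] at hdeg
    have := le_trans hdeg hdp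
    rw [Nat.cast_le] at this
    omega
  intro i
  have : p.coeff (i : ℕ) = g i := by
    rw [hp, Polynomial.finset_sum_coeff]
    simp [Polynomial.coeff_C_mul, Polynomial.coeff_X_pow, Fin.val_eq_val,
      Finset.sum_ite_eq]
  rw [hp0] at this
  simpa using this.symm

end Aux

/-- If B ∈ ℂ^{n×n} is non-derogatory (cyclic), i.e. its minimal polynomial has degree n,
then the derivative π'(B) : ℂ^{n×n} → ℂ^n of the symmetrization map at B is surjective:
non-derogatory matrices are regular points of π. -/
theorem surjective_fderiv_symmPi_of_nonderogatory
    (n : ℕ) (hn : 0 < n) (B : Matrix (Fin n) (Fin n) ℂ)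
    (hB : (minpoly ℂ B).natDegree = n) :
    Function.Surjective (fderiv ℂ (symmPi n) B) := by
  classical
  -- derivative of each component
  have hdiffc : ∀ j : Fin n, DifferentiableAt ℂ
      (fun M : Matrix (Fin n) (Fin n) ℂ => matSigma n ((j : ℕ) + 1) M) B := by
    intro j
    exact ((diff_charpoly_coeff (n := n) (n - ((j : ℕ) + 1))) B).const_mul _
  have hfd : fderiv ℂ (symmPi n) B
      = ContinuousLinearMap.pi fun j : Fin n =>
          fderiv ℂ (fun M : Matrix (Fin n) (Fin n) ℂ => matSigma n ((j : ℕ) + 1) M) B := by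
    exact fderiv_pi hdiffc
  have happly : ∀ (H : Matrix (Fin n) (Fin n) ℂ) (j : Fin n),
      fderiv ℂ (symmPi n) B H j
        = (-1 : ℂ) ^ (j : ℕ) * ∑ i, ∑ l, H i l * (Dmat B (n - 1 - (j : ℕ))) l i := by
    intro H j
    rw [hfd]
    rw [ContinuousLinearMap.pi_apply]
    have h1 : (fun M : Matrix (Fin n) (Fin n) ℂ => matSigma n ((j : ℕ) + 1) M)
        = fun M => (-1 : ℂ) ^ ((j : ℕ) + 1)
            * (Matrix.charpoly M).coeff (n - ((j : ℕ) + 1)) := rfl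
    rw [h1]; erw [fderiv_const_mul ((diff_charpoly_coeff (n - ((j : ℕ) + 1))) B)]
    erw [show ∀ (c : ℂ) (f : Matrix (Fin n) (Fin n) ℂ →L[ℂ] ℂ) (x : Matrix (Fin n) (Fin n) ℂ),
        (c • f) x = c • f x from fun _ _ _ => rfl, fderiv_charpoly_coeff_apply]
    have h2 : n - ((j : ℕ) + 1) = n - 1 - (j : ℕ) := by omega
    rw [h2, pow_succ, smul_eq_mul]
    have h3 : ∀ i l, H i l * (Dmat B (n - 1 - (j : ℕ))) l i
        = H i l * ((adjugate (charmatrix B)) l i).coeff (n - 1 - (j : ℕ)) := fun i l => rfl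
    rw [Finset.sum_congr rfl fun i _ => Finset.sum_congr rfl fun l _ => h3 i l]
    ring
  -- suppose not surjective
  by_contra hns
  set Lc := fderiv ℂ (symmPi n) B with hLc
  have hlt : LinearMap.range (Lc : Matrix (Fin n) (Fin n) ℂ →ₗ[ℂ] (Fin n → ℂ)) < ⊤ := by
    rcases lt_or_eq_of_le (le_top (a := LinearMap.range
      (Lc : Matrix (Fin n) (Fin n) ℂ →ₗ[ℂ] (Fin n → ℂ)))) with h | h
    · exact h
    · exact absurd (LinearMap.range_eq_top.mp h) hns
  obtain ⟨φ, hφ0, hφ⟩ := Submodule.exists_dual_map_eq_bot_of_lt_top hlt inferInstance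
  have hker : ∀ H : Matrix (Fin n) (Fin n) ℂ, φ (Lc H) = 0 := by
    intro H
    have hmem : Lc H ∈ LinearMap.range (Lc : Matrix (Fin n) (Fin n) ℂ →ₗ[ℂ] (Fin n → ℂ)) :=
      ⟨H, rfl⟩
    have : φ (Lc H) ∈ Submodule.map φ
        (LinearMap.range (Lc : Matrix (Fin n) (Fin n) ℂ →ₗ[ℂ] (Fin n → ℂ))) :=
      Submodule.mem_map_of_mem hmem
    rw [hφ] at this
    simpa using this
  set c : Fin n → ℂ := fun j => (-1 : ℂ) ^ (j : ℕ) * φ (Pi.single j 1) with hc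
  -- key sum identity
  have hsum : ∀ H : Matrix (Fin n) (Fin n) ℂ,
      ∑ j : Fin n, c j * (∑ i, ∑ l, H i l * (Dmat B (n - 1 - (j : ℕ))) l i) = 0 := by
    intro H
    have h1 := hker H
    rw [LinearMap.pi_apply_eq_sum_univ φ (Lc H)] at h1
    have hs : ∀ j : Fin n, (fun j' => if j = j' then (1:ℂ) else 0) = Pi.single j 1 := by
      intro j; funext j'; simp [Pi.single_apply, eq_comm]
    rw [← h1]
    refine Finset.sum_congr rfl fun j _ => ?_
    rw [happly H j, smul_eq_mul, hc]
    simp only [hs]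
    ring
  -- entries of the mixed matrix vanish
  set Emix : Matrix (Fin n) (Fin n) ℂ := ∑ j : Fin n, c j • Dmat B (n - 1 - (j : ℕ))
    with hEmix
  have hEzero : Emix = 0 := by
    ext l i
    have h1 := hsum (Matrix.of fun i' l' => if i' = i ∧ l' = l then (1 : ℂ) else 0)
    have h2 : ∀ j : Fin n, (∑ i', ∑ l',
        (Matrix.of fun i' l' => if i' = i ∧ l' = l then (1 : ℂ) else 0) i' l'
          * (Dmat B (n - 1 - (j : ℕ))) l' i') = (Dmat B (n - 1 - (j : ℕ))) l i := by
      intro j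
      rw [Finset.sum_eq_single i]
      · rw [Finset.sum_eq_single l]
        · simp
        · intro b _ hb; simp [hb]
        · intro h; exact absurd (Finset.mem_univ l) h
      · intro b _ hb
        apply Finset.sum_eq_zero
        intro l' _
        simp [hb]
      · intro h; exact absurd (Finset.mem_univ i) h
    rw [Finset.sum_congr rfl fun j _ => by rw [h2 j]] at h1
    simpa [hEmix, Matrix.sum_apply] using h1
  -- structure of Dmat in terms of powers of B
  have hstr : ∀ j : Fin n, ∃ a : ℕ → ℂ,
      Dmat B (n - 1 - (j : ℕ)) = B ^ (j : ℕ) + ∑ s ∈ Finset.range j, a s • B ^ s :=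
    fun j => Dmat_struct hn B j j.isLt
  choose a ha using hstr
  set T : Fin n → ℕ → ℂ := fun j s =>
    if s = (j : ℕ) then 1 else if s < (j : ℕ) then a j s else 0 with hTdef
  have hT : ∀ j : Fin n,
      Dmat B (n - 1 - (j : ℕ)) = ∑ s : Fin n, T j (s : ℕ) • B ^ (s : ℕ) := by
    intro j
    rw [ha j, Fin.sum_univ_eq_sum_range (fun s => T j s • B ^ s) n]
    rw [← Finset.sum_subset (Finset.range_subset_range.mpr (show (j : ℕ) + 1 ≤ n from j.isLt))
      (fun x _ hx => by
        rw [Finset.mem_range, not_lt] at hx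
        have h1 : x ≠ (j : ℕ) := by omega
        have h2 : ¬ x < (j : ℕ) := by omega
        simp [hTdef, h1, h2])]
    rw [Finset.sum_range_succ]
    simp only [hTdef, if_pos rfl, one_smul]
    rw [add_comm]
    congr 1
    refine Finset.sum_congr rfl fun s hs => ?_
    rw [Finset.mem_range] at hs
    simp [Nat.ne_of_lt hs, hs]
  -- conclude coefficients vanish
  have hgamma : ∀ s : Fin n, (∑ j : Fin n, c j * T j (s : ℕ)) = 0 := by
    have hsum2 : ∑ s : Fin n, (∑ j : Fin n, c j * T j (s : ℕ)) • B ^ (s : ℕ) = 0 := by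
      have e1 : Emix = ∑ s : Fin n, (∑ j : Fin n, c j * T j (s : ℕ)) • B ^ (s : ℕ) := by
        rw [hEmix]
        rw [Finset.sum_congr rfl fun j (_ : j ∈ (Finset.univ : Finset (Fin n))) => by
          rw [hT j, Finset.smul_sum]]
        rw [Finset.sum_comm]
        refine Finset.sum_congr rfl fun s _ => ?_
        rw [Finset.sum_smul]
        exact Finset.sum_congr rfl fun j _ => smul_smul _ _ _
      rw [← e1, hEzero]
    exact pow_linearIndependent hn B hB _ hsum2
  have hczero : ∀ j : Fin n, c j = 0 := by
    by_contra hcne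
    push_neg at hcne
    obtain ⟨j1, hj1⟩ := hcne
    set S : Finset (Fin n) := Finset.univ.filter (fun j => c j ≠ 0) with hS
    have hSne : S.Nonempty := ⟨j1, by simp [hS, hj1]⟩
    set j0 := S.max' hSne with hj0
    have hj0mem : j0 ∈ S := S.max'_mem hSne
    have hj0ne : c j0 ≠ 0 := by
      rw [hS] at hj0mem; simpa using hj0mem
    have h1 : ∑ j : Fin n, c j * T j (j0 : ℕ) = c j0 := by
      rw [Finset.sum_eq_single j0]
      · simp [hTdef]
      · intro j _ hj
        rcases lt_trichotomy (j0 : ℕ) (j : ℕ) with h | h | h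
        · have hjS : j ∉ S := by
            intro hjS
            exact absurd (Fin.lt_iff_val_lt_val.mpr h) (not_lt.mpr (S.le_max' j hjS))
          have : c j = 0 := by
            by_contra hne; exact hjS (by simp [hS, hne])
          rw [this, zero_mul]
        · exact (hj (Fin.val_injective h).symm).elim
        · have h1 : (j0 : ℕ) ≠ (j : ℕ) := by omega
          have h2 : ¬ (j0 : ℕ) < (j : ℕ) := by omega
          simp [hTdef, h1, h2]
      · intro h; exact absurd (Finset.mem_univ j0) h
    rw [hgamma j0] at h1
    exact hj0ne h1.symm
  -- hence φ vanishes on the basis, so φ = 0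
  have hφsingle : ∀ j : Fin n, φ (Pi.single j 1) = 0 := by
    intro j
    have := hczero j
    rw [hc] at this
    have hpow : ((-1 : ℂ) ^ (j : ℕ)) ≠ 0 := by
      apply pow_ne_zero; norm_num
    field_simp at this
    exact (mul_eq_zero.mp this).resolve_left hpow
  apply hφ0
  apply LinearMap.ext
  intro x
  have hs2 : ∀ i : Fin n, (fun j => if i = j then (1:ℂ) else 0) = Pi.single i 1 := by
    intro i; funext j'; simp [Pi.single_apply, eq_comm]
  rw [LinearMap.pi_apply_eq_sum_univ φ x]
  simp only [hs2, hφsingle]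
  simp
end
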